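/- arXiv:math/0408354 — 6 statements merged into one kernel-verified Lean document; each statement's English description precedes it below -/
import Mathlib

section
/- For any set S of 2n+1 points in the plane in general position (no three collinear, no four concyclic), there exists a circle passing through exactly three points of S, with exactly n-1 points of S in its interior and n-1 in its exterior. -/
open scoped Classical

noncomputable section

abbrev Pt : Type := EuclideanSpace ℝ (Fin 2)

/-- `p` lies on the circle with center `c` and radius `r`. -/
def onC (c : Pt) (r : ℝ) (p : Pt) : Prop := dist p c = r

/-- `p` lies strictly inside the circle with center `c` and radius `r`. -/
def insideC (c : Pt) (r : ℝ) (p : Pt) : Prop := dist p c < r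

/-- `p` lies strictly outside the circle with center `c` and radius `r`. -/
def outsideC (c : Pt) (r : ℝ) (p : Pt) : Prop := r < dist p c

/-- Four points lie on a common circle. -/
def Concyclic4 (p q u v : Pt) : Prop :=
  ∃ c r, 0 < r ∧ onC c r p ∧ onC c r q ∧ onC c r u ∧ onC c r v

/-- No three points of `S` collinear, no four concyclic. -/
def GenPos (S : Finset Pt) : Prop :=
  (∀ p ∈ S, ∀ q ∈ S, ∀ u ∈ S, p ≠ q → p ≠ u → q ≠ u →
      ¬ Collinear ℝ ({p, q, u} : Set Pt)) ∧
  (∀ p ∈ S, ∀ q ∈ S, ∀ u ∈ S, ∀ v ∈ S,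
      p ≠ q → p ≠ u → p ≠ v → q ≠ u → q ≠ v → u ≠ v → ¬ Concyclic4 p q u v)

/-- The circle `(c, r)` is halving for `S` (with `|S| = 2n+1`). -/
def IsHalving (n : ℕ) (S : Finset Pt) (c : Pt) (r : ℝ) : Prop :=
  0 < r ∧ (S.filter (onC c r)).card = 3 ∧
  (S.filter (insideC c r)).card = n - 1 ∧ (S.filter (outsideC c r)).card = n - 1

/-- The set of halving circles of `S`, encoded as center–radius pairs. -/
def halvingSet (n : ℕ) (S : Finset Pt) : Set (Pt × ℝ) :=
  {cr | IsHalving n S cr.1 cr.2}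

/-- Signed area / cross-product test for which side of line `AB` the point `P` is on. -/
def sideVal (A B P : Pt) : ℝ :=
  (B 0 - A 0) * (P 1 - A 1) - (B 1 - A 1) * (P 0 - A 0)

/-! ### Auxiliary material for the proof -/

/-- The power-of-a-point style quadratic `⟪x-a, x-b⟫` vanishing on the circle with
diameter `ab`. -/
def Qf (a b x : Pt) : ℝ := (x 0 - a 0) * (x 0 - b 0) + (x 1 - a 1) * (x 1 - b 1)

lemma pt_ext {a b : Pt} (h0 : a 0 = b 0) (h1 : a 1 = b 1) : a = b := by
  ext i; fin_cases i <;> assumption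

lemma dist_sq (x y : Pt) : dist x y ^ 2 = (x 0 - y 0)^2 + (x 1 - y 1)^2 := by
  rw [EuclideanSpace.dist_eq, Real.sq_sqrt (by positivity)]
  simp [Fin.sum_univ_two, Real.dist_eq, sq_abs]

lemma onC_iff {c : Pt} {r : ℝ} (hr : 0 < r) (q : Pt) :
    onC c r q ↔ dist q c ^ 2 - r ^ 2 = 0 := by
  unfold onC
  constructor
  · intro h; rw [h]; ring
  · intro h
    rcases mul_eq_zero.mp (show (dist q c - r) * (dist q c + r) = 0 by linear_combination h) with
      h2 | h2
    · linarith
    · have := dist_nonneg (x := q) (y := c); linarith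

lemma insideC_iff {c : Pt} {r : ℝ} (hr : 0 < r) (q : Pt) :
    insideC c r q ↔ dist q c ^ 2 - r ^ 2 < 0 := by
  unfold insideC
  have hd := dist_nonneg (x := q) (y := c)
  constructor <;> intro h <;> nlinarith

lemma outsideC_iff {c : Pt} {r : ℝ} (hr : 0 < r) (q : Pt) :
    outsideC c r q ↔ 0 < dist q c ^ 2 - r ^ 2 := by
  unfold outsideC
  have hd := dist_nonneg (x := q) (y := c)
  constructor <;> intro h <;> nlinarith

/-- Any member of the pencil of circles through `a` and `b` (parametrized by `t`)
is a genuine circle. -/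
lemma circle_exists (a b : Pt) (hab : a ≠ b) (t : ℝ) :
    ∃ c r, 0 < r ∧ ∀ x : Pt, dist x c ^ 2 - r ^ 2 = Qf a b x + t * sideVal a b x := by
  set c : Pt := WithLp.toLp 2 ![((a 0 + b 0) + t * (b 1 - a 1)) / 2, ((a 1 + b 1) - t * (b 0 - a 0)) / 2] with hc
  have hc0 : c 0 = ((a 0 + b 0) + t * (b 1 - a 1)) / 2 := rfl
  have hc1 : c 1 = ((a 1 + b 1) - t * (b 0 - a 0)) / 2 := rfl
  set r : ℝ := dist a c with hr
  have key : ∀ x : Pt, dist x c ^ 2 - r ^ 2 = Qf a b x + t * sideVal a b x := by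
    intro x
    rw [hr, dist_sq, dist_sq]
    simp only [Qf, sideVal, hc0, hc1]
    ring
  refine ⟨c, r, ?_, key⟩
  rcases lt_or_ge 0 r with h | h
  · exact h
  · exfalso
    have hr0 : r = 0 := le_antisymm h dist_nonneg
    have ha : a = c := dist_eq_zero.mp hr0
    have hb := key b
    rw [hr0] at hb
    have hQb : Qf a b b + t * sideVal a b b = 0 := by simp only [Qf, sideVal]; ring
    rw [hQb] at hb
    have : dist b c = 0 := by nlinarith [dist_nonneg (x := b) (y := c)]
    exact hab (ha.trans (dist_eq_zero.mp this).symm)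

lemma smul_vadd_coord (t : ℝ) (v A : Pt) (i : Fin 2) : (t • v +ᵥ A) i = t * v i + A i := rfl

lemma collinear_of_sideVal {A B P : Pt} (h : sideVal A B P = 0) :
    Collinear ℝ ({A, B, P} : Set Pt) := by
  by_cases hAB : A = B
  · subst hAB
    simp only [Set.insert_comm, Set.insert_idem]
    exact collinear_pair ℝ _ _
  rw [collinear_iff_of_mem (Set.mem_insert A _)]
  refine ⟨B - A, ?_⟩
  have hv0 : (B - A) 0 = B 0 - A 0 := rfl
  have hv1 : (B - A) 1 = B 1 - A 1 := rfl
  rintro p (rfl | rfl | rfl)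
  · exact ⟨0, by apply pt_ext <;> simp [smul_vadd_coord]⟩
  · exact ⟨1, by apply pt_ext <;> simp [smul_vadd_coord, hv0, hv1]⟩
  · rcases ne_or_eq (B 0 - A 0) 0 with h0 | h0
    · refine ⟨(p 0 - A 0) / (B 0 - A 0), ?_⟩
      apply pt_ext <;> simp only [smul_vadd_coord, hv0, hv1] <;> field_simp <;>
        simp only [sideVal] at h <;> nlinarith [h]
    · have h1 : B 1 - A 1 ≠ 0 := by
        intro h1; exact hAB (pt_ext (by linarith) (by linarith))
      refine ⟨(p 1 - A 1) / (B 1 - A 1), ?_⟩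
      apply pt_ext <;> simp only [smul_vadd_coord, hv0, hv1] <;> field_simp <;>
        simp only [sideVal] at h <;> nlinarith [h]

lemma median_lemma (m : ℕ) (F : Finset ℝ) (h : F.card = 2 * m + 1) :
    ∃ x ∈ F, (F.filter (fun y => y < x)).card = m ∧ (F.filter (fun y => x < y)).card = m := by
  have hm : m < 2 * m + 1 := by omega
  let e := F.orderIsoOfFin h
  set i : Fin (2 * m + 1) := ⟨m, hm⟩ with hi
  refine ⟨(e i : ℝ), (e i).2, ?_, ?_⟩
  · have hbij : (F.filter (fun y => y < (e i : ℝ))).card = (Finset.Iio i).card := by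
      refine Finset.card_bij' (fun y hy => e.symm ⟨y, (Finset.mem_filter.mp hy).1⟩)
        (fun j _ => (e j : ℝ)) ?_ ?_ ?_ ?_
      · intro y hy
        have h2 := (Finset.mem_filter.mp hy).2
        have : (⟨y, (Finset.mem_filter.mp hy).1⟩ : {x // x ∈ F}) < e i := Subtype.mk_lt_mk.mpr h2
        simpa using e.symm.lt_iff_lt.mpr this
      · intro j hj
        refine Finset.mem_filter.mpr ⟨(e j).2, ?_⟩
        have hj' : j < i := Finset.mem_Iio.mp hj
        exact Subtype.coe_lt_coe.mpr (e.lt_iff_lt.mpr hj')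
      · intro y hy; simp
      · intro j hj; simp
    rw [hbij, Fin.card_Iio]
  · have hbij : (F.filter (fun y => (e i : ℝ) < y)).card = (Finset.Ioi i).card := by
      refine Finset.card_bij' (fun y hy => e.symm ⟨y, (Finset.mem_filter.mp hy).1⟩)
        (fun j _ => (e j : ℝ)) ?_ ?_ ?_ ?_
      · intro y hy
        have h2 := (Finset.mem_filter.mp hy).2
        have : e i < (⟨y, (Finset.mem_filter.mp hy).1⟩ : {x // x ∈ F}) := Subtype.mk_lt_mk.mpr h2
        simpa using e.symm.lt_iff_lt.mpr this
      · intro j hj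
        refine Finset.mem_filter.mpr ⟨(e j).2, ?_⟩
        have hj' : i < j := Finset.mem_Ioi.mp hj
        exact Subtype.coe_lt_coe.mpr (e.lt_iff_lt.mpr hj')
      · intro y hy; simp
      · intro j hj; simp
    rw [hbij, Fin.card_Ioi]
    simp [hi]
    omega

lemma exists_hull_edge (S : Finset Pt) (h3 : 3 ≤ S.card)
    (hcol : ∀ p ∈ S, ∀ q ∈ S, ∀ u ∈ S, p ≠ q → p ≠ u → q ≠ u →
      ¬ Collinear ℝ ({p, q, u} : Set Pt)) :
    ∃ a ∈ S, ∃ b ∈ S, a ≠ b ∧ ∀ q ∈ S, q ≠ a → q ≠ b → 0 < sideVal a b q := by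
  have hne : S.Nonempty := Finset.card_pos.mp (by omega)
  obtain ⟨a', ha'S, ha'min⟩ := S.exists_min_image (fun p => p 0) hne
  set A := S.filter (fun p => p 0 = a' 0) with hA
  have hA_ne : A.Nonempty := ⟨a', Finset.mem_filter.mpr ⟨ha'S, rfl⟩⟩
  obtain ⟨a, haA, hamin⟩ := A.exists_min_image (fun p => p 1) hA_ne
  have haS : a ∈ S := (Finset.mem_filter.mp haA).1
  have ha0 : a 0 = a' 0 := (Finset.mem_filter.mp haA).2
  have hxmin : ∀ q ∈ S, a 0 ≤ q 0 := fun q hq => ha0 ▸ ha'min q hq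
  have hymin : ∀ q ∈ S, q 0 = a 0 → a 1 ≤ q 1 := by
    intro q hq hq0
    exact hamin q (Finset.mem_filter.mpr ⟨hq, by rw [hq0, ha0]⟩)
  have hsv : ∀ p ∈ S, ∀ q ∈ S, ∀ u ∈ S, p ≠ q → p ≠ u → q ≠ u → sideVal p q u ≠ 0 := by
    intro p hp q hq u hu h1 h2 h3 hz
    exact hcol p hp q hq u hu h1 h2 h3 (collinear_of_sideVal hz)
  set T' := S.filter (fun q => a 0 < q 0) with hT'
  have hT'_ne : T'.Nonempty := by
    by_contra hc
    rw [Finset.not_nonempty_iff_eq_empty] at hc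
    have hall : ∀ q ∈ S, q 0 = a 0 := by
      intro q hq
      by_contra hne'
      have : a 0 < q 0 := lt_of_le_of_ne (hxmin q hq) (Ne.symm hne')
      have : q ∈ T' := Finset.mem_filter.mpr ⟨hq, this⟩
      simp [hc] at this
    have h2 : 1 < (S.erase a).card := by
      rw [Finset.card_erase_of_mem haS]; omega
    obtain ⟨q, hq, q', hq', hqq'⟩ := Finset.one_lt_card.mp h2
    have hqS := Finset.mem_of_mem_erase hq
    have hq'S := Finset.mem_of_mem_erase hq'
    have hqa := Finset.ne_of_mem_erase hq
    have hq'a := Finset.ne_of_mem_erase hq'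
    refine hsv a haS q hqS q' hq'S (Ne.symm hqa) (Ne.symm hq'a) hqq' ?_
    simp only [sideVal, hall q hqS, hall q' hq'S]
    ring
  obtain ⟨b, hbT', hbmin⟩ := T'.exists_min_image (fun q => (q 1 - a 1) / (q 0 - a 0)) hT'_ne
  have hbS : b ∈ S := (Finset.mem_filter.mp hbT').1
  have hb0 : a 0 < b 0 := (Finset.mem_filter.mp hbT').2
  have hab : a ≠ b := fun h => by rw [h] at hb0; exact lt_irrefl _ hb0
  refine ⟨a, haS, b, hbS, hab, ?_⟩
  intro q hqS hqa hqb
  have hne0 : sideVal a b q ≠ 0 := hsv a haS b hbS q hqS hab (Ne.symm hqa) (Ne.symm hqb)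
  rcases lt_or_ge 0 (sideVal a b q) with h | h
  · exact h
  exfalso
  apply hne0
  refine le_antisymm h ?_
  rcases eq_or_lt_of_le (hxmin q hqS) with h0 | h0
  · have hq1 : a 1 < q 1 := by
      rcases eq_or_lt_of_le (hymin q hqS h0.symm) with h1 | h1
      · exact absurd (pt_ext h0.symm h1.symm) hqa
      · exact h1
    have : sideVal a b q = (b 0 - a 0) * (q 1 - a 1) := by
      simp only [sideVal]; rw [← h0]; ring
    rw [this]
    nlinarith [hb0, hq1]
  · have hqT' : q ∈ T' := Finset.mem_filter.mpr ⟨hqS, h0⟩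
    have hk := hbmin q hqT'
    rw [div_le_div_iff₀ (by linarith) (by linarith)] at hk
    simp only [sideVal]
    nlinarith [hk]

/-- Any set of `2n+1` points in general position has a halving circle. -/
theorem exists_halving_circle (n : ℕ) (hn : 1 ≤ n) (S : Finset Pt)
    (hcard : S.card = 2 * n + 1) (hgen : GenPos S) :
    ∃ c r, IsHalving n S c r := by
  obtain ⟨a, haS, b, hbS, hab, hedge⟩ :=
    exists_hull_edge S (by omega) hgen.1
  set T : Finset Pt := (S.erase a).erase b with hT
  have hmemT : ∀ q, q ∈ T ↔ q ∈ S ∧ q ≠ a ∧ q ≠ b := by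
    intro q
    simp only [hT, Finset.mem_erase]
    tauto
  have hTcard : T.card = 2 * (n - 1) + 1 := by
    rw [hT, Finset.card_erase_of_mem, Finset.card_erase_of_mem haS, hcard]
    · omega
    · exact Finset.mem_erase.mpr ⟨hab.symm, hbS⟩
  have hL : ∀ q ∈ T, 0 < sideVal a b q := by
    intro q hq
    obtain ⟨hqS, hqa, hqb⟩ := (hmemT q).mp hq
    exact hedge q hqS hqa hqb
  set φ : Pt → ℝ := fun q => -(Qf a b q) / sideVal a b q with hφ
  have hQL : ∀ q ∈ T, ∀ t : ℝ,
      Qf a b q + t * sideVal a b q = sideVal a b q * (t - φ q) := by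
    intro q hq t
    have h := (hL q hq).ne'
    simp only [hφ]
    field_simp
    ring
  -- injectivity of φ on T
  have hinj : ∀ p ∈ T, ∀ q ∈ T, φ p = φ q → p = q := by
    intro p hp q hq hpq
    by_contra hne
    obtain ⟨c, r, hr, hcirc⟩ := circle_exists a b hab (φ p)
    obtain ⟨hpS, hpa, hpb⟩ := (hmemT p).mp hp
    obtain ⟨hqS, hqa, hqb⟩ := (hmemT q).mp hq
    have honA : onC c r a := by
      rw [onC_iff hr, hcirc a]
      simp only [Qf, sideVal]; ring
    have honB : onC c r b := by
      rw [onC_iff hr, hcirc b]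
      simp only [Qf, sideVal]; ring
    have honP : onC c r p := by
      rw [onC_iff hr, hcirc p, hQL p hp]
      ring
    have honQ : onC c r q := by
      rw [onC_iff hr, hcirc q, hQL q hq, ← hpq]
      ring
    exact hgen.2 a haS b hbS p hpS q hqS hab hpa.symm hqa.symm hpb.symm hqb.symm hne
      ⟨c, r, hr, honA, honB, honP, honQ⟩
  have hinjOn : Set.InjOn φ T := fun p hp q hq h => hinj p hp q hq h
  -- median of φ over T
  set F : Finset ℝ := T.image φ with hF
  have hFcard : F.card = 2 * (n - 1) + 1 := by
    rw [hF, Finset.card_image_of_injOn hinjOn, hTcard]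
  obtain ⟨x, hxF, hlo, hhi⟩ := median_lemma (n - 1) F hFcard
  obtain ⟨p, hpT, hpx⟩ := Finset.mem_image.mp hxF
  obtain ⟨hpS, hpa, hpb⟩ := (hmemT p).mp hpT
  obtain ⟨c, r, hr, hcirc⟩ := circle_exists a b hab (φ p)
  have hsign : ∀ q ∈ T, dist q c ^ 2 - r ^ 2 = sideVal a b q * (φ p - φ q) := by
    intro q hq
    rw [hcirc q, hQL q hq]
  have honA : onC c r a := by
    rw [onC_iff hr, hcirc a]; simp only [Qf, sideVal]; ring
  have honB : onC c r b := by
    rw [onC_iff hr, hcirc b]; simp only [Qf, sideVal]; ring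
  have honP : onC c r p := by
    rw [onC_iff hr, hsign p hpT]; ring
  refine ⟨c, r, hr, ?_, ?_, ?_⟩
  · -- exactly three points on the circle
    have hset : S.filter (onC c r) = {a, b, p} := by
      ext q
      simp only [Finset.mem_filter, Finset.mem_insert, Finset.mem_singleton]
      constructor
      · rintro ⟨hqS, hon⟩
        by_cases hqa : q = a
        · exact Or.inl hqa
        by_cases hqb : q = b
        · exact Or.inr (Or.inl hqb)
        have hqT : q ∈ T := (hmemT q).mpr ⟨hqS, hqa, hqb⟩
        rw [onC_iff hr, hsign q hqT] at hon
        rcases mul_eq_zero.mp hon with h | h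
        · exact absurd h (hL q hqT).ne'
        · have : φ p = φ q := by linarith [sub_eq_zero.mp h]
          exact Or.inr (Or.inr (hinj q hqT p hpT this.symm))
      · rintro (rfl | rfl | rfl)
        · exact ⟨haS, honA⟩
        · exact ⟨hbS, honB⟩
        · exact ⟨hpS, honP⟩
    rw [hset]
    rw [Finset.card_insert_of_notMem, Finset.card_insert_of_notMem, Finset.card_singleton]
    · simpa using Ne.symm hpb
    · simp [hab, hpa.symm]
  · -- inside count
    have hset : S.filter (insideC c r) = T.filter (fun q => x < φ q) := by
      ext q
      simp only [Finset.mem_filter]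
      constructor
      · rintro ⟨hqS, hin⟩
        by_cases hqa : q = a
        · exfalso; subst hqa
          rw [insideC_iff hr] at hin
          rw [onC_iff hr] at honA
          linarith
        by_cases hqb : q = b
        · exfalso; subst hqb
          rw [insideC_iff hr] at hin
          rw [onC_iff hr] at honB
          linarith
        have hqT : q ∈ T := (hmemT q).mpr ⟨hqS, hqa, hqb⟩
        refine ⟨hqT, ?_⟩
        rw [insideC_iff hr, hsign q hqT] at hin
        have := hL q hqT
        rw [← hpx]
        nlinarith
      · rintro ⟨hqT, hlt⟩
        obtain ⟨hqS, _, _⟩ := (hmemT q).mp hqT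
        refine ⟨hqS, ?_⟩
        rw [insideC_iff hr, hsign q hqT]
        have := hL q hqT
        rw [← hpx] at hlt
        nlinarith
    rw [hset]
    have himg : (T.filter (fun q => x < φ q)).image φ = F.filter (fun y => x < y) := by
      rw [hF, Finset.filter_image]
    have : (T.filter (fun q => x < φ q)).card = (F.filter (fun y => x < y)).card := by
      rw [← himg, Finset.card_image_of_injOn
        (hinjOn.mono (fun q hq => (Finset.mem_filter.mp hq).1))]
    rw [this, hhi]
  · -- outside count
    have hset : S.filter (outsideC c r) = T.filter (fun q => φ q < x) := by
      ext q
      simp only [Finset.mem_filter]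
      constructor
      · rintro ⟨hqS, hout⟩
        by_cases hqa : q = a
        · exfalso; subst hqa
          rw [outsideC_iff hr] at hout
          rw [onC_iff hr] at honA
          linarith
        by_cases hqb : q = b
        · exfalso; subst hqb
          rw [outsideC_iff hr] at hout
          rw [onC_iff hr] at honB
          linarith
        have hqT : q ∈ T := (hmemT q).mpr ⟨hqS, hqa, hqb⟩
        refine ⟨hqT, ?_⟩
        rw [outsideC_iff hr, hsign q hqT] at hout
        have := hL q hqT
        rw [← hpx]
        nlinarith
      · rintro ⟨hqT, hlt⟩
        obtain ⟨hqS, _, _⟩ := (hmemT q).mp hqT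
        refine ⟨hqS, ?_⟩
        rw [outsideC_iff hr, hsign q hqT]
        have := hL q hqT
        rw [← hpx] at hlt
        nlinarith
    rw [hset]
    have himg : (T.filter (fun q => φ q < x)).image φ = F.filter (fun y => y < x) := by
      rw [hF, Finset.filter_image]
    have : (T.filter (fun q => φ q < x)).card = (F.filter (fun y => y < x)).card := by
      rw [← himg, Finset.card_image_of_injOn
        (hinjOn.mono (fun q hq => (Finset.mem_filter.mp hq).1))]
    rw [this, hlo]
end
end

section
/- For any set S of 2n+1 points in general position in the plane and any two consecutive vertices A, B of the convex hull of S, there exists a halving circle of S passing through A and B. -/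
open scoped Classical

noncomputable section

/-! The circles through `A` and `B` form a one-parameter pencil, whose centres run along the
perpendicular bisector of `AB`. For a point `q` off the line `AB`, its power with respect to the
circle with parameter `t` is an affine function of `t` whose slope is `-2 · sideVal A B q`. Hence,
if every other point of `S` lies on the same side of `AB`, each of them has a parameter at which
its circle passes through it, the circle with parameter `t` contains exactly the points whose
parameter is smaller than `t`, and no two points share a parameter because no four points of `S`
are concyclic. The circle through the point with the median parameter is halving. -/

open Finset

section Median

variable {α β : Type*} [LinearOrder β]

theorem Finset.exists_mem_card_filter_lt_eq {s : Finset β} {k : ℕ} (hk : k < #s) :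
    ∃ v ∈ s, #{x ∈ s | x < v} = k := by
  set e := s.orderEmbOfFin rfl
  set i : Fin #s := ⟨k, hk⟩
  have hfilter : {x ∈ s | x < e i} = (Iio i).image e := by
    ext x
    simp only [mem_filter, mem_image, mem_Iio]
    constructor
    · rintro ⟨hx, hlt⟩
      obtain ⟨j, rfl⟩ : x ∈ Set.range e := by rwa [range_orderEmbOfFin]
      exact ⟨j, e.lt_iff_lt.1 hlt, rfl⟩
    · rintro ⟨j, hj, rfl⟩
      exact ⟨s.orderEmbOfFin_mem rfl j, e.lt_iff_lt.2 hj⟩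
  exact ⟨e i, s.orderEmbOfFin_mem rfl i, by
    rw [hfilter, card_image_of_injective _ e.injective, Fin.card_Iio]⟩

theorem Finset.card_filter_lt_add_card_filter_gt_add_card_filter_eq (s : Finset α) (g : α → β)
    (v : β) : #{x ∈ s | g x < v} + #{x ∈ s | v < g x} + #{x ∈ s | g x = v} = #s := by
  rw [← card_union_of_disjoint (disjoint_filter.2 fun _ _ h₁ h₂ => lt_asymm h₁ h₂), ← filter_or,
    add_comm]
  simp only [lt_or_lt_iff_ne]
  exact card_filter_add_card_filter_not _

theorem Finset.exists_median_of_injOn {s : Finset α} {f : α → β} (hf : Set.InjOn f s) {m : ℕ}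
    (hs : #s = 2 * m + 1) :
    ∃ p ∈ s, #{q ∈ s | f q < f p} = m ∧ #{q ∈ s | f p < f q} = m := by
  have himage : #(s.image f) = 2 * m + 1 := by rw [card_image_of_injOn hf, hs]
  obtain ⟨v, hv, hlt⟩ := exists_mem_card_filter_lt_eq (k := m) (s := s.image f) (by omega)
  have hpart := card_filter_lt_add_card_filter_gt_add_card_filter_eq (s.image f) id v
  simp only [id, filter_eq', hv, if_true, card_singleton] at hpart
  obtain ⟨p, hp, rfl⟩ := mem_image.1 hv
  have hcount (P : β → Prop) [DecidablePred P] :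
      #{q ∈ s | P (f q)} = #{x ∈ s.image f | P x} := by
    rw [filter_image, card_image_of_injOn (hf.mono (filter_subset _ s))]
  exact ⟨p, hp, by rw [hcount (· < f p)]; omega, by rw [hcount (f p < ·)]; omega⟩

end Median

theorem Finset.filter_sdiff_of_forall_not {α : Type*} [DecidableEq α] {s t : Finset α}
    {p : α → Prop} [DecidablePred p] (h : ∀ x ∈ t, ¬ p x) :
    {x ∈ s \ t | p x} = {x ∈ s | p x} := by
  ext x
  simp only [mem_filter, mem_sdiff]
  exact ⟨fun hx => ⟨hx.1.1, hx.2⟩, fun hx => ⟨⟨hx.1, fun hxt => h x hxt hx.2⟩, hx.2⟩⟩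

theorem forall_pos_or_forall_neg_of_forall_mul_pos {ι R : Type*} [Ring R] [LinearOrder R]
    [IsStrictOrderedRing R] {s : Set ι} {f : ι → R} (h : ∀ p ∈ s, ∀ q ∈ s, 0 < f p * f q) :
    (∀ q ∈ s, 0 < f q) ∨ ∀ q ∈ s, f q < 0 := by
  by_contra! ⟨⟨q, hq, hfq⟩, ⟨p, hp, hfp⟩⟩
  exact (h p hp q hq).not_ge (mul_nonpos_of_nonneg_of_nonpos hfp hfq)

theorem sideVal_swap (A B P : Pt) : sideVal B A P = -sideVal A B P := by
  simp only [sideVal]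
  ring

theorem dist_sq_eq_coords (p q : Pt) : dist p q ^ 2 = (p 0 - q 0) ^ 2 + (p 1 - q 1) ^ 2 := by
  simp [EuclideanSpace.dist_sq_eq, Fin.sum_univ_two, Real.dist_eq, sq_abs]

section Pencil

def pencilCenter (A B : Pt) (t : ℝ) : Pt := midpoint ℝ A B + t • !₂[A 1 - B 1, B 0 - A 0]

/-- The parameter of the circle of the pencil through `q` (junk `0` when `q` is on the
line `AB`). -/
def pencilParam (A B q : Pt) : ℝ :=
  (dist q (midpoint ℝ A B) ^ 2 - dist A (midpoint ℝ A B) ^ 2) / (2 * sideVal A B q)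

variable {A B q : Pt} {t : ℝ}

theorem dist_sq_pencilCenter_sub (A B q : Pt) (t : ℝ) :
    dist q (pencilCenter A B t) ^ 2 - dist A (pencilCenter A B t) ^ 2
      = dist q (midpoint ℝ A B) ^ 2 - dist A (midpoint ℝ A B) ^ 2 - 2 * t * sideVal A B q := by
  simp only [dist_sq_eq_coords, pencilCenter, sideVal, midpoint_eq_smul_add, invOf_eq_inv,
    smul_add, PiLp.add_apply, PiLp.smul_apply, smul_eq_mul, Matrix.cons_val_zero,
    Matrix.cons_val_one]
  ring

theorem dist_sq_pencilCenter_sub_eq (hq : sideVal A B q ≠ 0) :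
    dist q (pencilCenter A B t) ^ 2 - dist A (pencilCenter A B t) ^ 2
      = 2 * sideVal A B q * (pencilParam A B q - t) := by
  rw [dist_sq_pencilCenter_sub, pencilParam]
  field_simp

theorem onC_pencilCenter_right (A B : Pt) (t : ℝ) :
    onC (pencilCenter A B t) (dist A (pencilCenter A B t)) B := by
  have hBB : sideVal A B B = 0 := by
    rw [sideVal]
    ring
  rw [onC, ← sq_eq_sq₀ dist_nonneg dist_nonneg, ← sub_eq_zero, dist_sq_pencilCenter_sub, hBB]
  simp [dist_left_midpoint, dist_right_midpoint]

theorem dist_pencilCenter_pos (hAB : A ≠ B) : 0 < dist A (pencilCenter A B t) := by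
  have hB : dist B (pencilCenter A B t) = dist A (pencilCenter A B t) :=
    onC_pencilCenter_right A B t
  exact dist_pos.2 fun hA => hAB (hA.trans (dist_eq_zero.1 (hB.trans (dist_eq_zero.2 hA))).symm)

theorem onC_pencilCenter_iff (hq : sideVal A B q ≠ 0) :
    onC (pencilCenter A B t) (dist A (pencilCenter A B t)) q ↔ pencilParam A B q = t := by
  rw [onC, ← sq_eq_sq₀ dist_nonneg dist_nonneg, ← sub_eq_zero, dist_sq_pencilCenter_sub_eq hq]
  simp [hq, sub_eq_zero]

theorem insideC_pencilCenter_iff (hq : 0 < sideVal A B q) :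
    insideC (pencilCenter A B t) (dist A (pencilCenter A B t)) q ↔ pencilParam A B q < t := by
  rw [insideC, ← sq_lt_sq₀ dist_nonneg dist_nonneg, ← sub_neg, dist_sq_pencilCenter_sub_eq hq.ne',
    ← smul_eq_mul, smul_neg_iff_of_pos_left (by positivity), sub_neg]

theorem outsideC_pencilCenter_iff (hq : 0 < sideVal A B q) :
    outsideC (pencilCenter A B t) (dist A (pencilCenter A B t)) q ↔ t < pencilParam A B q := by
  rw [outsideC, ← sq_lt_sq₀ dist_nonneg dist_nonneg, ← sub_pos, dist_sq_pencilCenter_sub_eq hq.ne',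
    mul_pos_iff_of_pos_left (by positivity), sub_pos]

theorem concyclic4_of_pencilParam_eq {q' : Pt} (hAB : A ≠ B) (hq : sideVal A B q ≠ 0)
    (hq' : sideVal A B q' ≠ 0) (h : pencilParam A B q = pencilParam A B q') :
    Concyclic4 A B q q' :=
  ⟨_, _, dist_pencilCenter_pos hAB, rfl, onC_pencilCenter_right A B _,
    (onC_pencilCenter_iff hq).2 rfl, (onC_pencilCenter_iff hq').2 h.symm⟩

end Pencil

theorem exists_halving_circle_of_forall_sideVal_pos {n : ℕ} {S : Finset Pt}
    (hcard : #S = 2 * n + 1) (hgen : GenPos S) {A B : Pt} (hA : A ∈ S) (hB : B ∈ S) (hAB : A ≠ B)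
    (hside : ∀ q ∈ S \ {A, B}, 0 < sideVal A B q) :
    ∃ c r, IsHalving n S c r ∧ onC c r A ∧ onC c r B := by
  set T := S \ {A, B}
  have hpair : {A, B} ⊆ S := insert_subset hA (singleton_subset_iff.2 hB)
  have hn : 1 ≤ n := by
    have := card_le_card hpair
    rw [card_pair hAB] at this
    omega
  have hT : #T = 2 * (n - 1) + 1 := by
    rw [card_sdiff_of_subset hpair, card_pair hAB, hcard]
    omega
  have hinj : Set.InjOn (pencilParam A B) T := by
    intro q hq q' hq' h
    by_contra hne
    obtain ⟨hqS, hqA, hqB⟩ : q ∈ S ∧ q ≠ A ∧ q ≠ B := by simpa [T] using hq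
    obtain ⟨hq'S, hq'A, hq'B⟩ : q' ∈ S ∧ q' ≠ A ∧ q' ≠ B := by simpa [T] using hq'
    exact hgen.2 A hA B hB q hqS q' hq'S hAB hqA.symm hq'A.symm hqB.symm hq'B.symm hne
      (concyclic4_of_pencilParam_eq hAB (hside q hq).ne' (hside q' hq').ne' h)
  obtain ⟨P, -, hlt, hgt⟩ := exists_median_of_injOn hinj hT
  set c := pencilCenter A B (pencilParam A B P)
  have hAB_on : ∀ x ∈ ({A, B} : Finset Pt), onC c (dist A c) x := by
    simp only [mem_insert, mem_singleton, forall_eq_or_imp, forall_eq]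
    exact ⟨rfl, onC_pencilCenter_right A B _⟩
  have hin : #(S.filter (insideC c (dist A c))) = n - 1 := by
    rw [← hlt, ← filter_sdiff_of_forall_not (p := insideC c (dist A c))
      fun x hx => (hAB_on x hx).not_lt]
    exact congrArg card (filter_congr fun q hq => insideC_pencilCenter_iff (hside q hq))
  have hout : #(S.filter (outsideC c (dist A c))) = n - 1 := by
    rw [← hgt, ← filter_sdiff_of_forall_not (p := outsideC c (dist A c))
      fun x hx => (hAB_on x hx).not_gt]
    exact congrArg card (filter_congr fun q hq => outsideC_pencilCenter_iff (hside q hq))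
  have hpart : #(S.filter (insideC c (dist A c))) + #(S.filter (outsideC c (dist A c)))
      + #(S.filter (onC c (dist A c))) = #S :=
    card_filter_lt_add_card_filter_gt_add_card_filter_eq S (dist · c) (dist A c)
  refine ⟨c, dist A c, ⟨dist_pencilCenter_pos hAB, ?_, hin, hout⟩, rfl, hAB_on B (by simp)⟩
  omega

theorem exists_halving_circle_through_hull_edge_general (n : ℕ) (S : Finset Pt)
    (hcard : S.card = 2 * n + 1) (hgen : GenPos S)
    (A B : Pt) (hA : A ∈ S) (hB : B ∈ S) (hAB : A ≠ B)
    (hedge : ∀ p ∈ S, p ≠ A → p ≠ B → ∀ q ∈ S, q ≠ A → q ≠ B →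
      0 < sideVal A B p * sideVal A B q) :
    ∃ c r, IsHalving n S c r ∧ onC c r A ∧ onC c r B := by
  have hside : ∀ p ∈ (↑(S \ {A, B}) : Set Pt), ∀ q ∈ (↑(S \ {A, B}) : Set Pt),
      0 < sideVal A B p * sideVal A B q := by
    simp only [mem_coe, mem_sdiff, mem_insert, mem_singleton, not_or]
    exact fun p ⟨hp, hpA, hpB⟩ q ⟨hq, hqA, hqB⟩ => hedge p hp hpA hpB q hq hqA hqB
  rcases forall_pos_or_forall_neg_of_forall_mul_pos hside with hpos | hneg
  · exact exists_halving_circle_of_forall_sideVal_pos hcard hgen hA hB hAB hpos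
  · obtain ⟨c, r, hhalf, hBc, hAc⟩ := exists_halving_circle_of_forall_sideVal_pos hcard hgen hB hA
      hAB.symm fun q hq => by
        rw [sideVal_swap, neg_pos]
        exact hneg q (by rwa [pair_comm] at hq)
    exact ⟨c, r, hhalf, hAc, hBc⟩

/-- For consecutive hull vertices `A, B` of `S` (all other points of `S` strictly
on one side of line `AB`), there is a halving circle through `A` and `B`. -/
theorem exists_halving_circle_through_hull_edge (n : ℕ) (hn : 1 ≤ n) (S : Finset Pt)
    (hcard : S.card = 2 * n + 1) (hgen : GenPos S)
    (A B : Pt) (hA : A ∈ S) (hB : B ∈ S) (hAB : A ≠ B)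
    (hedge : ∀ p ∈ S, p ≠ A → p ≠ B → ∀ q ∈ S, q ≠ A → q ≠ B →
      0 < sideVal A B p * sideVal A B q) :
    ∃ c r, IsHalving n S c r ∧ onC c r A ∧ onC c r B :=
  exists_halving_circle_through_hull_edge_general n S hcard hgen A B hA hB hAB hedge
end
end

section
/- For any set S of 2n+1 points in general position in the plane and any two distinct points A, B ∈ S, there exists a halving circle of S passing through A and B. -/
open scoped Classical

noncomputable section

/-- Discrete intermediate value theorem for ℕ-valued sequences with upward steps ≤ 1. -/
lemma nat_ivt (f : ℕ → ℕ) (hstep : ∀ k, f (k+1) ≤ f k + 1) (a b v : ℕ) (hab : a ≤ b)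
    (h1 : f a ≤ v) (h2 : v ≤ f b) : ∃ j, a ≤ j ∧ j ≤ b ∧ f j = v := by
  induction b with
  | zero => exact ⟨0, Nat.le_zero.mp hab ▸ Nat.le_refl _, le_refl _, le_antisymm (Nat.le_zero.mp hab ▸ h1) h2⟩
  | succ b ih =>
    rcases Nat.lt_or_ge v (f (b+1)) with hlt | hge
    · rcases Nat.lt_or_ge b a with hba | hab'
      · -- a = b+1
        have : a = b + 1 := le_antisymm hab hba
        exact ⟨a, le_refl _, hab, le_antisymm (this ▸ h1) (this ▸ h2)⟩
      · have hfb : v ≤ f b := by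
          have := hstep b; omega
        obtain ⟨j, hj1, hj2, hj3⟩ := ih hab' hfb
        exact ⟨j, hj1, hj2.trans (Nat.le_succ b), hj3⟩
    · exact ⟨b+1, hab, le_refl _, le_antisymm hge h2⟩

lemma real_comb (n : ℕ) (hn : 1 ≤ n) (U : Finset ℝ) (hU : U.card = 2*n - 1)
    (pos : ℝ → Prop) :
    ∃ t ∈ U, (U.filter (fun u => (u < t ∧ pos u) ∨ (t < u ∧ ¬ pos u))).card = n - 1 := by
  set m := 2*n - 1 with hm
  have hm1 : 1 ≤ m := by omega
  have e : Fin m ≃o {x // x ∈ U} := U.orderIsoOfFin hU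
  set E : ℕ → ℝ := fun k => (e ⟨min k (m-1), by omega⟩ : ℝ) with hE
  have hEmem : ∀ k, E k ∈ U := fun k => (e _).2
  have hEmono : ∀ k l : ℕ, k ≤ l → E k ≤ E l := by
    intro k l hkl
    have : (⟨min k (m-1), by omega⟩ : Fin m) ≤ ⟨min l (m-1), by omega⟩ := by
      simp only [Fin.mk_le_mk]; omega
    exact_mod_cast e.monotone this
  have hsurj : ∀ u ∈ U, ∃ k ≤ m - 1, E k = u := by
    intro u hu
    obtain ⟨i, hi⟩ := e.surjective ⟨u, hu⟩
    refine ⟨i.1, by omega, ?_⟩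
    simp only [hE]
    have : min i.1 (m-1) = i.1 := by omega
    rw [show (⟨min i.1 (m-1), by omega⟩ : Fin m) = i from Fin.ext this, hi]
  have hEcompare : ∀ u ∈ U, ∀ k, u < E (k+1) → u ≤ E k := by
    intro u hu k hlt
    obtain ⟨i, hi, rfl⟩ := hsurj u hu
    rcases Nat.lt_or_ge k i with h | h
    · -- then E (k+1) ≤ E i = u, contradiction
      exact absurd (hEmono (k+1) i (by omega)) (by linarith)
    · exact hEmono i k h
  set g : ℕ → ℕ := fun k =>
    (U.filter (fun u => (u < E k ∧ pos u) ∨ (E k < u ∧ ¬ pos u))).card with hg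
  -- step bounds
  have step1 : ∀ k, g (k+1) ≤ g k + 1 := by
    intro k
    have hsub : (U.filter (fun u => (u < E (k+1) ∧ pos u) ∨ (E (k+1) < u ∧ ¬ pos u))) ⊆
        insert (E k) (U.filter (fun u => (u < E k ∧ pos u) ∨ (E k < u ∧ ¬ pos u))) := by
      intro u hu
      rw [Finset.mem_filter] at hu
      obtain ⟨huU, hcase⟩ := hu
      rcases hcase with ⟨h1, h2⟩ | ⟨h1, h2⟩
      · rcases lt_or_eq_of_le (hEcompare u huU k h1) with h | h
        · exact Finset.mem_insert_of_mem (Finset.mem_filter.mpr ⟨huU, Or.inl ⟨h, h2⟩⟩)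
        · rw [h]; exact Finset.mem_insert_self _ _
      · have : E k ≤ E (k+1) := hEmono k (k+1) (Nat.le_succ k)
        exact Finset.mem_insert_of_mem (Finset.mem_filter.mpr ⟨huU, Or.inr ⟨by linarith, h2⟩⟩)
    exact le_trans (Finset.card_le_card hsub) (Finset.card_insert_le _ _)
  have step2 : ∀ k, g k ≤ g (k+1) + 1 := by
    intro k
    have hsub : (U.filter (fun u => (u < E k ∧ pos u) ∨ (E k < u ∧ ¬ pos u))) ⊆
        insert (E (k+1)) (U.filter (fun u => (u < E (k+1) ∧ pos u) ∨ (E (k+1) < u ∧ ¬ pos u))) := by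
      intro u hu
      rw [Finset.mem_filter] at hu
      obtain ⟨huU, hcase⟩ := hu
      rcases hcase with ⟨h1, h2⟩ | ⟨h1, h2⟩
      · have : E k ≤ E (k+1) := hEmono k (k+1) (Nat.le_succ k)
        exact Finset.mem_insert_of_mem (Finset.mem_filter.mpr ⟨huU, Or.inl ⟨by linarith, h2⟩⟩)
      · -- E k < u: then E (k+1) ≤ u, if equal in insert, else filter
        by_cases h : u = E (k+1)
        · rw [h]; exact Finset.mem_insert_self _ _
        · have hle : E (k+1) ≤ u := by
            by_contra hcon
            push_neg at hcon
            have := hEcompare u huU k hcon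
            linarith
          exact Finset.mem_insert_of_mem (Finset.mem_filter.mpr ⟨huU,
            Or.inr ⟨lt_of_le_of_ne hle (Ne.symm h), h2⟩⟩)
    exact le_trans (Finset.card_le_card hsub) (Finset.card_insert_le _ _)
  -- endpoint bounds
  have hmin : ∀ u ∈ U, E 0 ≤ u := by
    intro u hu
    obtain ⟨i, _, rfl⟩ := hsurj u hu
    exact hEmono 0 i (Nat.zero_le i)
  have hmax : ∀ u ∈ U, u ≤ E (m-1) := by
    intro u hu
    obtain ⟨i, hi, rfl⟩ := hsurj u hu
    exact hEmono i (m-1) hi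
  set N := (U.filter (fun u => ¬ pos u)).card with hN
  set P := (U.filter (fun u => pos u)).card with hP
  have hNP : P + N = m := by
    have := Finset.card_filter_add_card_filter_not (s := U) (fun u => pos u)
    omega
  have hg0_le : g 0 ≤ N := by
    apply Finset.card_le_card
    intro u hu
    rw [Finset.mem_filter] at hu ⊢
    refine ⟨hu.1, ?_⟩
    rcases hu.2 with ⟨h1, _⟩ | ⟨_, h2⟩
    · exact absurd h1 (not_lt.mpr (hmin u hu.1))
    · exact h2
  have hg0_ge : N ≤ g 0 + 1 := by
    have hsub : U.filter (fun u => ¬ pos u) ⊆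
        insert (E 0) (U.filter (fun u => (u < E 0 ∧ pos u) ∨ (E 0 < u ∧ ¬ pos u))) := by
      intro u hu
      rw [Finset.mem_filter] at hu
      by_cases h : u = E 0
      · rw [h]; exact Finset.mem_insert_self _ _
      · exact Finset.mem_insert_of_mem (Finset.mem_filter.mpr ⟨hu.1,
          Or.inr ⟨lt_of_le_of_ne (hmin u hu.1) (Ne.symm h), hu.2⟩⟩)
    exact le_trans (Finset.card_le_card hsub) (Finset.card_insert_le _ _)
  have hgl_le : g (m-1) ≤ P := by
    apply Finset.card_le_card
    intro u hu
    rw [Finset.mem_filter] at hu ⊢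
    refine ⟨hu.1, ?_⟩
    rcases hu.2 with ⟨_, h2⟩ | ⟨h1, _⟩
    · exact h2
    · exact absurd h1 (not_lt.mpr (hmax u hu.1))
  have hgl_ge : P ≤ g (m-1) + 1 := by
    have hsub : U.filter (fun u => pos u) ⊆
        insert (E (m-1)) (U.filter (fun u => (u < E (m-1) ∧ pos u) ∨ (E (m-1) < u ∧ ¬ pos u))) := by
      intro u hu
      rw [Finset.mem_filter] at hu
      by_cases h : u = E (m-1)
      · rw [h]; exact Finset.mem_insert_self _ _
      · exact Finset.mem_insert_of_mem (Finset.mem_filter.mpr ⟨hu.1,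
          Or.inl ⟨lt_of_le_of_ne (hmax u hu.1) h, hu.2⟩⟩)
    exact le_trans (Finset.card_le_card hsub) (Finset.card_insert_le _ _)
  -- find k with g k = n - 1
  have key : ∃ k ≤ m - 1, g k = n - 1 := by
    rcases Nat.lt_or_ge (g 0) n with h0 | h0
    · rcases Nat.lt_or_ge (g (m-1)) n with hl | hl
      · -- both ≤ n-1; can't both be < n-1
        rcases Nat.lt_or_ge (g 0) (n-1) with h0' | h0'
        · rcases Nat.lt_or_ge (g (m-1)) (n-1) with hl' | hl'
          · omega
          · exact ⟨m-1, le_refl _, by omega⟩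
        · exact ⟨0, by omega, by omega⟩
      · -- g 0 ≤ n-1 ≤ g (m-1): increasing IVT
        obtain ⟨j, _, hj2, hj3⟩ := nat_ivt g step1 0 (m-1) (n-1) (Nat.zero_le _) (by omega) (by omega)
        exact ⟨j, hj2, hj3⟩
    · rcases Nat.lt_or_ge (g (m-1)) n with hl | hl
      · -- g (m-1) ≤ n-1 ≤ g 0 : decreasing, use reversed sequence
        set f : ℕ → ℕ := fun k => g ((m-1) - k) with hf
        have hfstep : ∀ k, f (k+1) ≤ f k + 1 := by
          intro k
          rcases Nat.lt_or_ge k (m-1) with h | h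
          · have h1 : (m-1) - (k+1) + 1 = (m-1) - k := by omega
            simp only [hf]
            calc g ((m-1)-(k+1)) ≤ g ((m-1)-(k+1)+1) + 1 := step2 _
            _ = g ((m-1)-k) + 1 := by rw [h1]
          · have : (m-1) - (k+1) = (m-1) - k := by omega
            simp only [hf, this]; omega
        obtain ⟨j, _, hj2, hj3⟩ := nat_ivt f hfstep 0 (m-1) (n-1) (Nat.zero_le _)
          (by simp only [hf, Nat.sub_zero]; omega) (by simp only [hf, Nat.sub_self]; omega)
        exact ⟨(m-1) - j, by omega, hj3⟩
      · omega
  obtain ⟨k, _, hk⟩ := key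
  exact ⟨E k, hEmem k, hk⟩

lemma point_comb {α : Type*} [DecidableEq α] (n : ℕ) (hn : 1 ≤ n) (T : Finset α)
    (hT : T.card = 2*n - 1) (τ : α → ℝ) (hinj : Set.InjOn τ T) (pos : α → Prop) :
    ∃ P ∈ T, (T.filter (fun Q => (τ Q < τ P ∧ pos Q) ∨ (τ P < τ Q ∧ ¬ pos Q))).card = n - 1 := by
  classical
  set U := T.image τ with hUdef
  have hUcard : U.card = 2*n - 1 := by rw [hUdef, Finset.card_image_of_injOn hinj, hT]
  set pos' : ℝ → Prop := fun u => ∃ Q ∈ T, τ Q = u ∧ pos Q with hpos'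
  obtain ⟨t, htU, hcount⟩ := real_comb n hn U hUcard pos'
  obtain ⟨P, hPT, hPt⟩ := Finset.mem_image.mp htU
  refine ⟨P, hPT, ?_⟩
  have hposiff : ∀ Q ∈ T, (pos' (τ Q) ↔ pos Q) := by
    intro Q hQ
    constructor
    · rintro ⟨Q', hQ', hQQ', hp⟩
      rwa [hinj hQ' hQ hQQ'] at hp
    · intro hp; exact ⟨Q, hQ, rfl, hp⟩
  have himg : (T.filter (fun Q => (τ Q < τ P ∧ pos Q) ∨ (τ P < τ Q ∧ ¬ pos Q))).image τ
      = U.filter (fun u => (u < t ∧ pos' u) ∨ (t < u ∧ ¬ pos' u)) := by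
    rw [hUdef, Finset.filter_image]
    congr 1
    apply Finset.filter_congr
    intro Q hQ
    rw [hPt, hposiff Q hQ]
  have hinj2 : Set.InjOn τ (T.filter (fun Q => (τ Q < τ P ∧ pos Q) ∨ (τ P < τ Q ∧ ¬ pos Q))) := by
    intro x hx y hy hxy
    exact hinj (T.filter_subset _ (by exact_mod_cast hx)) (T.filter_subset _ (by exact_mod_cast hy)) hxy
  rw [← Finset.card_image_of_injOn hinj2, himg]
  convert hcount using 2
  ext u
  simp only [Finset.mem_filter]


def cc (A B : Pt) (t : ℝ) : Pt := WithLp.toLp 2 (fun i : Fin 2 =>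
  if i = 0 then (A 0 + B 0)/2 + t * (A 1 - B 1) else (A 1 + B 1)/2 + t * (B 0 - A 0))

lemma cc0 (A B : Pt) (t : ℝ) : cc A B t 0 = (A 0 + B 0)/2 + t * (A 1 - B 1) := rfl
lemma cc1 (A B : Pt) (t : ℝ) : cc A B t 1 = (A 1 + B 1)/2 + t * (B 0 - A 0) := by
  show (if (1 : Fin 2) = 0 then (A 0 + B 0)/2 + t * (A 1 - B 1) else (A 1 + B 1)/2 + t * (B 0 - A 0)) = _
  norm_num

def kk (A B P : Pt) : ℝ :=
  P 0^2 + P 1^2 - A 0^2 - A 1^2 - (P 0 - A 0)*(A 0 + B 0) - (P 1 - A 1)*(A 1 + B 1)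

lemma F_eq (A B P : Pt) (t : ℝ) :
    dist P (cc A B t)^2 - dist A (cc A B t)^2 = kk A B P - 2 * sideVal A B P * t := by
  rw [dist_sq, dist_sq, cc0, cc1, kk, sideVal]; ring

lemma distB_eq (A B : Pt) (t : ℝ) : dist B (cc A B t) = dist A (cc A B t) := by
  have h := F_eq A B B t
  have h2 : kk A B B - 2 * sideVal A B B * t = 0 := by rw [kk, sideVal]; ring
  have := dist_nonneg (x := B) (y := cc A B t)
  have := dist_nonneg (x := A) (y := cc A B t)
  nlinarith [h, h2]

lemma ptext {x y : Pt} (h0 : x 0 = y 0) (h1 : x 1 = y 1) : x = y := by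
  apply PiLp.ext; intro i
  fin_cases i <;> assumption

lemma collinear_of_sv {A B P : Pt} (hAB : A ≠ B) (h : sideVal A B P = 0) :
    Collinear ℝ ({A, B, P} : Set Pt) := by
  rw [collinear_iff_of_mem (Set.mem_insert A _)]
  refine ⟨B - A, ?_⟩
  intro p hp
  have vadd_eq : ∀ (r : ℝ) (v : Pt), r • v +ᵥ A = r • v + A := fun _ _ => rfl
  rcases hp with rfl | hp
  · exact ⟨0, by simp⟩
  rcases hp with rfl | hp
  · refine ⟨1, ?_⟩
    rw [vadd_eq, one_smul, sub_add_cancel]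
  rcases hp with rfl
  have hBA : B 0 - A 0 ≠ 0 ∨ B 1 - A 1 ≠ 0 := by
    by_contra hc
    push_neg at hc
    exact hAB (ptext (by linarith [hc.1]) (by linarith [hc.2])).symm
  rw [sideVal] at h
  rcases hBA with h0 | h1
  · refine ⟨(p 0 - A 0)/(B 0 - A 0), ?_⟩
    rw [vadd_eq]
    apply ptext
    · show p 0 = (p 0 - A 0)/(B 0 - A 0) * (B 0 - A 0) + A 0
      field_simp
      ring
    · show p 1 = (p 0 - A 0)/(B 0 - A 0) * (B 1 - A 1) + A 1
      field_simp
      nlinarith [h]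
  · refine ⟨(p 1 - A 1)/(B 1 - A 1), ?_⟩
    rw [vadd_eq]
    apply ptext
    · show p 0 = (p 1 - A 1)/(B 1 - A 1) * (B 0 - A 0) + A 0
      field_simp
      nlinarith [h]
    · show p 1 = (p 1 - A 1)/(B 1 - A 1) * (B 1 - A 1) + A 1
      field_simp
      ring

def tau (A B P : Pt) : ℝ := kk A B P / (2 * sideVal A B P)

lemma F_factor {A B P : Pt} (h : sideVal A B P ≠ 0) (t : ℝ) :
    kk A B P - 2 * sideVal A B P * t = 2 * sideVal A B P * (tau A B P - t) := by
  have : 2 * sideVal A B P * tau A B P = kk A B P := by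
    rw [tau]; field_simp
  linarith [this]

def rr (A B : Pt) (t : ℝ) : ℝ := dist A (cc A B t)

lemma rr_pos {A B : Pt} (hAB : A ≠ B) (t : ℝ) : 0 < rr A B t := by
  rcases lt_or_eq_of_le (dist_nonneg (x := A) (y := cc A B t)) with h | h
  · exact h
  · exfalso
    have hA : A = cc A B t := dist_eq_zero.mp h.symm
    have hB : B = cc A B t := dist_eq_zero.mp (by rw [distB_eq, ← h])
    exact hAB (hA.trans hB.symm)

lemma onC_iff_s2 (A B Q : Pt) (t : ℝ) :
    dist Q (cc A B t) = rr A B t ↔ kk A B Q - 2 * sideVal A B Q * t = 0 := by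
  rw [rr]
  constructor
  · intro h
    rw [← F_eq, h]; ring
  · intro h
    have h2 : dist Q (cc A B t)^2 = dist A (cc A B t)^2 := by
      have := F_eq A B Q t; linarith
    have := dist_nonneg (x := Q) (y := cc A B t)
    have := dist_nonneg (x := A) (y := cc A B t)
    nlinarith
lemma inC_iff (A B Q : Pt) (t : ℝ) :
    dist Q (cc A B t) < rr A B t ↔ kk A B Q - 2 * sideVal A B Q * t < 0 := by
  rw [rr, ← F_eq]
  constructor
  · intro h
    have := dist_nonneg (x := Q) (y := cc A B t)
    have := dist_nonneg (x := A) (y := cc A B t)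
    nlinarith
  · intro h
    have := dist_nonneg (x := Q) (y := cc A B t)
    have := dist_nonneg (x := A) (y := cc A B t)
    nlinarith
/-- Through any two points of `S` there is a halving circle. -/
theorem exists_halving_circle_through_pair (n : ℕ) (hn : 1 ≤ n) (S : Finset Pt)
    (hcard : S.card = 2 * n + 1) (hgen : GenPos S)
    (A B : Pt) (hA : A ∈ S) (hB : B ∈ S) (hAB : A ≠ B) :
    ∃ c r, IsHalving n S c r ∧ onC c r A ∧ onC c r B := by
  classical
  obtain ⟨hcol, hcyc⟩ := hgen
  set T := (S.erase A).erase B with hTdef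
  have hTmem : ∀ Q, Q ∈ T ↔ Q ∈ S ∧ Q ≠ A ∧ Q ≠ B := by
    intro Q
    simp only [hTdef, Finset.mem_erase]
    tauto
  have hBmem : B ∈ S.erase A := Finset.mem_erase.mpr ⟨hAB.symm, hB⟩
  have hTcard : T.card = 2*n - 1 := by
    rw [hTdef, Finset.card_erase_of_mem hBmem, Finset.card_erase_of_mem hA, hcard]
    omega
  have hsv : ∀ Q ∈ T, sideVal A B Q ≠ 0 := by
    intro Q hQ hzero
    obtain ⟨hQS, hQA, hQB⟩ := (hTmem Q).mp hQ
    exact hcol A hA B hB Q hQS hAB (Ne.symm hQA) (Ne.symm hQB) (collinear_of_sv hAB hzero)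
  have honc : ∀ (P : Pt), P ∈ T → ∀ t, t = tau A B P →
      onC (cc A B t) (rr A B t) P := by
    intro P hP t ht
    show dist P (cc A B t) = rr A B t
    rw [onC_iff_s2, F_factor (hsv P hP), ht, sub_self, mul_zero]
  have hinj : Set.InjOn (tau A B) T := by
    intro P hP Q hQ hPQ
    by_contra hne
    have hP' : P ∈ T := hP
    have hQ' : Q ∈ T := hQ
    obtain ⟨hPS, hPA, hPB⟩ := (hTmem P).mp hP'
    obtain ⟨hQS, hQA, hQB⟩ := (hTmem Q).mp hQ'
    apply hcyc A hA B hB P hPS Q hQS hAB (Ne.symm hPA) (Ne.symm hQA) (Ne.symm hPB)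
      (Ne.symm hQB) hne
    refine ⟨cc A B (tau A B P), rr A B (tau A B P), rr_pos hAB _, rfl,
      distB_eq A B _, honc P hP' _ rfl, honc Q hQ' _ hPQ⟩
  obtain ⟨P, hPT, hcount⟩ := point_comb n hn T hTcard (tau A B) hinj
    (fun Q => 0 < sideVal A B Q)
  obtain ⟨hPS, hPA, hPB⟩ := (hTmem P).mp hPT
  set t := tau A B P with htdef
  set c := cc A B t with hcdef
  set r := rr A B t with hrdef
  have honA : onC c r A := rfl
  have honB : onC c r B := distB_eq A B t
  have honP : onC c r P := honc P hPT t rfl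
  -- points on the circle are exactly A, B, P
  have hfil_on : S.filter (onC c r) = insert A (insert B ({P} : Finset Pt)) := by
    ext Q
    simp only [Finset.mem_filter, Finset.mem_insert, Finset.mem_singleton]
    constructor
    · rintro ⟨hQS, hQon⟩
      by_cases hQA : Q = A
      · exact Or.inl hQA
      by_cases hQB : Q = B
      · exact Or.inr (Or.inl hQB)
      have hQT : Q ∈ T := (hTmem Q).mpr ⟨hQS, hQA, hQB⟩
      have h0 : kk A B Q - 2 * sideVal A B Q * t = 0 := (onC_iff_s2 A B Q t).mp hQon
      rw [F_factor (hsv Q hQT)] at h0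
      have htau : tau A B Q = t := by
        rcases mul_eq_zero.mp h0 with h | h
        · exact absurd h (by
            intro hh
            exact hsv Q hQT (by linarith))
        · linarith
      exact Or.inr (Or.inr (hinj hQT hPT htau))
    · rintro (rfl | rfl | rfl)
      · exact ⟨hA, honA⟩
      · exact ⟨hB, honB⟩
      · exact ⟨hPS, honP⟩
  have hAP : A ≠ P := Ne.symm hPA
  have hBP : B ≠ P := Ne.symm hPB
  have hcard_on : (S.filter (onC c r)).card = 3 := by
    rw [hfil_on]
    rw [Finset.card_insert_of_notMem (by simp [hAB, hAP]),
      Finset.card_insert_of_notMem (by simp [hBP]), Finset.card_singleton]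
  -- points inside
  have hfil_in : S.filter (insideC c r) =
      T.filter (fun Q => (tau A B Q < tau A B P ∧ 0 < sideVal A B Q) ∨
        (tau A B P < tau A B Q ∧ ¬ 0 < sideVal A B Q)) := by
    ext Q
    simp only [Finset.mem_filter]
    constructor
    · rintro ⟨hQS, hQin⟩
      have hQin' : dist Q c < r := hQin
      by_cases hQA : Q = A
      · exfalso; rw [hQA] at hQin'; exact lt_irrefl r (honA ▸ hQin')
      by_cases hQB : Q = B
      · exfalso; rw [hQB] at hQin'
        rw [show dist B c = r from honB] at hQin'
        exact lt_irrefl r hQin'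
      have hQT : Q ∈ T := (hTmem Q).mpr ⟨hQS, hQA, hQB⟩
      refine ⟨hQT, ?_⟩
      have h0 : kk A B Q - 2 * sideVal A B Q * t < 0 := (inC_iff A B Q t).mp hQin'
      rw [F_factor (hsv Q hQT)] at h0
      rcases lt_trichotomy (sideVal A B Q) 0 with hs | hs | hs
      · right
        constructor
        · nlinarith
        · exact not_lt.mpr (le_of_lt hs)
      · exact absurd hs (hsv Q hQT)
      · left
        exact ⟨by nlinarith, hs⟩
    · rintro ⟨hQT, hcase⟩
      obtain ⟨hQS, _, _⟩ := (hTmem Q).mp hQT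
      refine ⟨hQS, ?_⟩
      show dist Q c < r
      rw [inC_iff, F_factor (hsv Q hQT)]
      rcases hcase with ⟨h1, h2⟩ | ⟨h1, h2⟩
      · nlinarith
      · have hs : sideVal A B Q < 0 := lt_of_le_of_ne (not_lt.mp h2) (hsv Q hQT)
        nlinarith
  have hcard_in : (S.filter (insideC c r)).card = n - 1 := by
    rw [hfil_in]
    convert hcount using 2
  -- outside count by complement
  have hdisj : Disjoint (S.filter (onC c r)) (S.filter (insideC c r)) := by
    rw [Finset.disjoint_left]
    intro Q hQ1 hQ2
    have h1 : dist Q c = r := (Finset.mem_filter.mp hQ1).2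
    have h2 : dist Q c < r := (Finset.mem_filter.mp hQ2).2
    exact absurd h1 (ne_of_lt h2)
  have hunion : S.filter (fun q => onC c r q ∨ insideC c r q) =
      S.filter (onC c r) ∪ S.filter (insideC c r) := Finset.filter_or _ _ _
  have hcard_union : (S.filter (fun q => onC c r q ∨ insideC c r q)).card = 3 + (n-1) := by
    rw [hunion, Finset.card_union_of_disjoint hdisj, hcard_on, hcard_in]
  have hout_eq : S.filter (outsideC c r) = S.filter (fun q => ¬ (onC c r q ∨ insideC c r q)) := by
    ext Q
    simp only [Finset.mem_filter, outsideC, onC, insideC, not_or, not_lt]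
    constructor
    · rintro ⟨hQS, h⟩
      exact ⟨hQS, ne_of_gt h, h.le⟩
    · rintro ⟨hQS, h1, h2⟩
      exact ⟨hQS, lt_of_le_of_ne h2 (Ne.symm h1)⟩
  have htot := Finset.card_filter_add_card_filter_not (s := S)
    (fun q => onC c r q ∨ insideC c r q)
  have hbridge : (S.filter (fun q => ¬ (onC c r q ∨ insideC c r q))).card
      = (S.filter (fun a => ¬ (onC c r a ∨ insideC c r a))).card := by
    congr 1
  have hcard_out : (S.filter (outsideC c r)).card = n - 1 := by
    rw [hout_eq, hbridge]
    omega
  exact ⟨c, r, ⟨rr_pos hAB t, hcard_on, hcard_in, hcard_out⟩, honA, honB⟩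
end
end

section
/- For any set S of 2n+1 points in general position in the plane, the number of halving circles of S is at least n(2n+1)/3. -/
open scoped Classical

noncomputable section
set_option maxHeartbeats 1000000

def mkPt (a b : ℝ) : Pt := (WithLp.equiv 2 (Fin 2 → ℝ)).symm ![a, b]
@[simp] lemma mkPt_zero (a b : ℝ) : mkPt a b 0 = a := rfl
@[simp] lemma mkPt_one (a b : ℝ) : mkPt a b 1 = b := rfl
lemma dist_lt_dist_iff {a b c : Pt} : dist a c < dist b c ↔ dist a c ^ 2 < dist b c ^ 2 := by
  rw [pow_lt_pow_iff_left₀ dist_nonneg dist_nonneg (by norm_num)]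
lemma dist_eq_dist_iff {a b c : Pt} : dist a c = dist b c ↔ dist a c ^ 2 = dist b c ^ 2 := by
  constructor
  · intro h; rw [h]
  · intro h
    nlinarith [dist_nonneg (x := a) (y := c), dist_nonneg (x := b) (y := c)]

-- The pencil of circles through p and q: center at parameter t
def ctr (p q : Pt) (t : ℝ) : Pt :=
  mkPt ((p 0 + q 0)/2 + t * (-(q 1 - p 1))) ((p 1 + q 1)/2 + t * (q 0 - p 0))

def Aval (p q x : Pt) : ℝ :=
  (x 0^2 + x 1^2 - p 0^2 - p 1^2) - (p 0 + q 0)*(x 0 - p 0) - (p 1 + q 1)*(x 1 - p 1)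

lemma gval (p q x : Pt) (t : ℝ) :
    dist x (ctr p q t) ^ 2 - dist p (ctr p q t) ^ 2 = Aval p q x - 2 * t * sideVal p q x := by
  rw [dist_sq, dist_sq]
  simp only [ctr, mkPt_zero, mkPt_one, Aval, sideVal]
  ring

lemma gval_q (p q : Pt) (t : ℝ) : dist q (ctr p q t) = dist p (ctr p q t) := by
  rw [dist_eq_dist_iff]
  have := gval p q q t
  have h1 : Aval p q q = 0 := by unfold Aval; ring
  have h2 : sideVal p q q = 0 := by unfold sideVal; ring
  rw [h1, h2] at this
  linarith

lemma radius_pos (p q : Pt) (hpq : p ≠ q) (t : ℝ) : 0 < dist p (ctr p q t) := by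
  rcases eq_or_lt_of_le (dist_nonneg (x := p) (y := ctr p q t)) with h | h
  · exfalso
    have hp0 : dist p (ctr p q t) = 0 := h.symm
    have h1 : p = ctr p q t := dist_eq_zero.mp hp0
    have h2 : q = ctr p q t := dist_eq_zero.mp ((gval_q p q t).trans hp0)
    exact hpq (h1.trans h2.symm)
  · exact h

lemma coord_ne {p q : Pt} (h : p ≠ q) : p 0 ≠ q 0 ∨ p 1 ≠ q 1 := by
  by_contra hc
  push_neg at hc
  exact h (by ext i; fin_cases i <;> simp [hc.1, hc.2])

lemma collinear_of_sideVal_s5 {p q x : Pt} (hpq : p ≠ q) (h : sideVal p q x = 0) :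
    Collinear ℝ ({p, q, x} : Set Pt) := by
  have hmem : p ∈ ({p, q, x} : Set Pt) := by simp
  rw [collinear_iff_of_mem hmem]
  refine ⟨q - p, ?_⟩
  intro z hz
  unfold sideVal at h
  have hco : ∀ (a : ℝ), a * (q 0 - p 0) = z 0 - p 0 → a * (q 1 - p 1) = z 1 - p 1 →
      z = a • (q - p) + p := by
    intro a h0 h1
    ext i; fin_cases i <;>
      simp only [PiLp.add_apply, PiLp.smul_apply, PiLp.sub_apply, smul_eq_mul] <;> [skip; skip] <;>
      first
        | (show z 0 = a * (q 0 - p 0) + p 0; linarith)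
        | (show z 1 = a * (q 1 - p 1) + p 1; linarith)
  rcases hz with rfl | rfl | rfl
  · exact ⟨0, hco 0 (by ring_nf) (by ring_nf)⟩
  · exact ⟨1, hco 1 (by ring) (by ring)⟩
  · rcases coord_ne hpq with hne | hne
    · have hd : q 0 - p 0 ≠ 0 := fun hc => hne (by linarith)
      refine ⟨(z 0 - p 0)/(q 0 - p 0), hco _ (by field_simp) ?_⟩
      field_simp
      linarith [h]
    · have hd : q 1 - p 1 ≠ 0 := fun hc => hne (by linarith)
      refine ⟨(z 1 - p 1)/(q 1 - p 1), hco _ ?_ (by field_simp)⟩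
      field_simp
      linarith [h]

lemma discreteIVT (f : ℕ → ℤ) (v : ℤ) :
    ∀ N : ℕ, (∀ k, k < N → f (k+1) - f k ≤ 1 ∧ f k - f (k+1) ≤ 1) →
    v ≤ f 0 → f N ≤ v → ∃ k, k ≤ N ∧ f k = v := by
  intro N
  induction N with
  | zero => intro _ h0 hN; exact ⟨0, le_refl _, le_antisymm hN h0⟩
  | succ m ih =>
    intro hstep h0 hN
    by_cases hm : f m ≤ v
    · obtain ⟨k, hk, hfk⟩ := ih (fun k hk => hstep k (by omega)) h0 hm
      exact ⟨k, by omega, hfk⟩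
    · push_neg at hm
      have := hstep m (by omega)
      exact ⟨m+1, le_refl _, by omega⟩

variable {α : Type*} [DecidableEq α]

lemma key_lemma (n : ℕ) (hn : 1 ≤ n) (T : Finset α) (hT : T.card = 2*n - 1)
    (r B : α → ℝ) (hinj : ∀ x ∈ T, ∀ y ∈ T, r x = r y → x = y)
    (hB : ∀ x ∈ T, B x ≠ 0)
    (ha : (T.filter (fun x => 0 < B x)).card ≤ n - 1) :
    ∃ x ∈ T, (T.filter (fun y => B y * (r y - r x) < 0)).card = n - 1 := by
  set R : Finset ℝ := T.image r with hR
  have hRcard : R.card = 2*n - 1 := by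
    rw [hR, Finset.card_image_of_injOn (fun x hx y hy => hinj x hx y hy), hT]
  have hNpos : 1 ≤ 2*n - 1 := by omega
  set e : Fin (2*n-1) ≃o {x // x ∈ R} := R.orderIsoOfFin hRcard with he
  -- s k : the k-th smallest root (k : ℕ, clipped)
  set idx : ℕ → Fin (2*n-1) := fun k => ⟨min k (2*n-2), by omega⟩ with hidx
  set s : ℕ → ℝ := fun k => (e (idx k) : ℝ) with hs
  have hsR : ∀ k, s k ∈ R := fun k => (e (idx k)).2
  set F : ℕ → Finset α := fun k => T.filter (fun y => B y * (r y - s k) < 0) with hF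
  set f : ℕ → ℤ := fun k => ((F k).card : ℤ) with hf
  -- each root s k has a unique point of T
  have hpt : ∀ k, ∃ u ∈ T, r u = s k := by
    intro k
    obtain ⟨u, hu, hru⟩ := Finset.mem_image.mp (hsR k)
    exact ⟨u, hu, hru⟩
  -- monotonicity of e over ℕ indices
  have hmono : ∀ j k : ℕ, j ≤ k → s j ≤ s k := by
    intro j k hjk
    have : idx j ≤ idx k := by simp [hidx, Fin.le_def]; omega
    exact e.monotone this
  -- no root strictly between s k and s (k+1)
  have hgap : ∀ k, k < 2*n-2 → ∀ y ∈ T, ¬ (s k < r y ∧ r y < s (k+1)) := by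
    intro k hk y hy hand
    obtain ⟨h1, h2⟩ := hand
    have hry : r y ∈ R := Finset.mem_image_of_mem r hy
    set j : Fin (2*n-1) := e.symm ⟨r y, hry⟩ with hj
    have hej : (e j : ℝ) = r y := by simp [hj]
    have l1 : e (idx k) < e j := by rw [← Subtype.coe_lt_coe, hej]; exact h1
    have l2 : e j < e (idx (k+1)) := by rw [← Subtype.coe_lt_coe, hej]; exact h2
    have l1' : (idx k : ℕ) < (j : ℕ) := e.lt_iff_lt.mp l1
    have l2' : (j : ℕ) < (idx (k+1) : ℕ) := e.lt_iff_lt.mp l2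
    simp only [hidx] at l1' l2'
    omega
  -- order facts
  have hs0_le : ∀ y ∈ T, s 0 ≤ r y := by
    intro y hy
    have hry : r y ∈ R := Finset.mem_image_of_mem r hy
    have : (e (e.symm ⟨r y, hry⟩) : ℝ) = r y := by simp
    rw [← this]
    exact Subtype.coe_le_coe.mpr (e.monotone (by simp [hidx, Fin.le_def]))
  have hslast_ge : ∀ y ∈ T, r y ≤ s (2*n-2) := by
    intro y hy
    have hry : r y ∈ R := Finset.mem_image_of_mem r hy
    have h2 : (e (e.symm ⟨r y, hry⟩) : ℝ) = r y := by simp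
    rw [← h2]
    refine Subtype.coe_le_coe.mpr (e.monotone ?_)
    simp only [hidx, Fin.le_def]
    have := (e.symm ⟨r y, hry⟩).2
    omega
  -- step bound
  have hstep : ∀ k, k < 2*n-2 → f (k+1) - f k ≤ 1 ∧ f k - f (k+1) ≤ 1 := by
    intro k hk
    obtain ⟨u, hu, hru⟩ := hpt k
    obtain ⟨v, hv, hrv⟩ := hpt (k+1)
    have hsub1 : F (k+1) ⊆ F k ∪ {u} := by
      intro y hy
      rw [hF, Finset.mem_filter] at hy
      obtain ⟨hyT, hylt⟩ := hy
      by_cases hyu : y = u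
      · exact Finset.mem_union_right _ (by simp [hyu])
      refine Finset.mem_union_left _ (Finset.mem_filter.mpr ⟨hyT, ?_⟩)
      have hne : r y ≠ s k := fun h => hyu (hinj y hyT u hu (h.trans hru.symm))
      rcases lt_or_gt_of_ne hne with hlt | hgt
      · have hle : s k ≤ s (k+1) := hmono k (k+1) (by omega)
        have hBpos : 0 < B y := by nlinarith
        nlinarith
      · have hge : s (k+1) ≤ r y := by
          by_contra hcon
          push_neg at hcon
          exact hgap k hk y hyT ⟨hgt, hcon⟩
        have hne2 : r y ≠ s (k+1) := fun h => by rw [h] at hylt; simp at hylt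
        have hgt2 : s (k+1) < r y := lt_of_le_of_ne hge (Ne.symm hne2)
        have hBneg : B y < 0 := by nlinarith
        nlinarith
    have hsub2 : F k ⊆ F (k+1) ∪ {v} := by
      intro y hy
      rw [hF, Finset.mem_filter] at hy
      obtain ⟨hyT, hylt⟩ := hy
      by_cases hyv : y = v
      · exact Finset.mem_union_right _ (by simp [hyv])
      refine Finset.mem_union_left _ (Finset.mem_filter.mpr ⟨hyT, ?_⟩)
      have hne : r y ≠ s (k+1) := fun h => hyv (hinj y hyT v hv (h.trans hrv.symm))
      have hnek : r y ≠ s k := fun h => by rw [h] at hylt; simp at hylt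
      rcases lt_or_gt_of_ne hnek with hlt | hgt
      · have hle : s k ≤ s (k+1) := hmono k (k+1) (by omega)
        have hBpos : 0 < B y := by nlinarith
        nlinarith
      · have hge : s (k+1) ≤ r y := by
          by_contra hcon
          push_neg at hcon
          exact hgap k hk y hyT ⟨hgt, hcon⟩
        have hgt2 : s (k+1) < r y := lt_of_le_of_ne hge (Ne.symm hne)
        have hBneg : B y < 0 := by nlinarith
        nlinarith
    have c1 : (F (k+1)).card ≤ (F k).card + 1 := by
      calc (F (k+1)).card ≤ (F k ∪ {u}).card := Finset.card_le_card hsub1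
        _ ≤ (F k).card + 1 := by
            have := Finset.card_union_le (F k) ({u} : Finset α)
            simpa using this
    have c2 : (F k).card ≤ (F (k+1)).card + 1 := by
      calc (F k).card ≤ (F (k+1) ∪ {v}).card := Finset.card_le_card hsub2
        _ ≤ (F (k+1)).card + 1 := by
            have := Finset.card_union_le (F (k+1)) ({v} : Finset α)
            simpa using this
    constructor <;> simp only [hf] <;> push_cast <;> omega
  -- negative-side count
  have hNeg : (T.filter (fun x => B x < 0)).card = 2*n - 1 - (T.filter (fun x => 0 < B x)).card := by
    have h1 : T.filter (fun x => ¬ 0 < B x) = T.filter (fun x => B x < 0) := by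
      apply Finset.filter_congr
      intro x hx
      constructor
      · intro h; rcases lt_or_gt_of_ne (hB x hx) with h' | h' <;> [exact h'; exact absurd h' h]
      · intro h; exact not_lt.mpr (le_of_lt h)
    have := Finset.card_filter_add_card_filter_not (s := T) (p := fun x => 0 < B x)
    rw [h1] at this
    omega
  -- endpoint 0
  have hf0 : (n : ℤ) - 1 ≤ f 0 := by
    obtain ⟨u0, hu0, hru0⟩ := hpt 0
    have hsub : (T.filter (fun x => B x < 0)).erase u0 ⊆ F 0 := by
      intro y hy
      obtain ⟨hyne, hymem⟩ := Finset.mem_erase.mp hy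
      rw [Finset.mem_filter] at hymem
      obtain ⟨hyT, hyB⟩ := hymem
      refine Finset.mem_filter.mpr ⟨hyT, ?_⟩
      have h1 : s 0 ≤ r y := hs0_le y hyT
      have h2 : r y ≠ s 0 := fun h => hyne (hinj y hyT u0 hu0 (h.trans hru0.symm))
      have : s 0 < r y := lt_of_le_of_ne h1 (Ne.symm h2)
      nlinarith
    have hcard1 : (T.filter (fun x => B x < 0)).card - 1 ≤ ((T.filter (fun x => B x < 0)).erase u0).card :=
      Finset.pred_card_le_card_erase
    have hcard2 : ((T.filter (fun x => B x < 0)).erase u0).card ≤ (F 0).card :=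
      Finset.card_le_card hsub
    simp only [hf]
    have : n - 1 ≤ (F 0).card := by omega
    push_cast
    omega
  -- endpoint last
  have hflast : f (2*n-2) ≤ (n : ℤ) - 1 := by
    have hsub : F (2*n-2) ⊆ T.filter (fun x => 0 < B x) := by
      intro y hy
      rw [hF, Finset.mem_filter] at hy
      obtain ⟨hyT, hylt⟩ := hy
      refine Finset.mem_filter.mpr ⟨hyT, ?_⟩
      have h1 : r y ≤ s (2*n-2) := hslast_ge y hyT
      rcases lt_or_gt_of_ne (hB y hyT) with h' | h'
      · nlinarith
      · exact h'
    have := Finset.card_le_card hsub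
    simp only [hf]
    push_cast
    omega
  obtain ⟨k, hkle, hfk⟩ := discreteIVT f ((n:ℤ)-1) (2*n-2) hstep hf0 hflast
  obtain ⟨x, hx, hrx⟩ := hpt k
  refine ⟨x, hx, ?_⟩
  have : ((T.filter (fun y => B y * (r y - r x) < 0)).card : ℤ) = (n:ℤ) - 1 := by
    rw [hrx]
    exact hfk
  omega
-- definitions from the problem statement

lemma exists_halving_aux (n : ℕ) (hn : 1 ≤ n) (S : Finset Pt)
    (hcard : S.card = 2 * n + 1) (hgen : GenPos S)
    (p : Pt) (hp : p ∈ S) (q : Pt) (hq : q ∈ S) (hpq : p ≠ q)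
    (ha : (((S.erase p).erase q).filter (fun x => 0 < sideVal p q x)).card ≤ n - 1) :
    ∃ c r, IsHalving n S c r ∧ onC c r p ∧ onC c r q := by
  set T := (S.erase p).erase q with hT
  have hTsub : ∀ x, x ∈ T → x ∈ S ∧ x ≠ p ∧ x ≠ q := by
    intro x hx
    rw [hT, Finset.mem_erase, Finset.mem_erase] at hx
    exact ⟨hx.2.2, hx.2.1, hx.1⟩
  have hTcard : T.card = 2*n - 1 := by
    rw [hT, Finset.card_erase_of_mem (Finset.mem_erase.mpr ⟨hpq.symm, hq⟩),
      Finset.card_erase_of_mem hp, hcard]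
    omega
  set B : Pt → ℝ := fun x => sideVal p q x with hBdef
  set A : Pt → ℝ := fun x => Aval p q x with hAdef
  set rt : Pt → ℝ := fun x => A x / (2 * B x) with hrt
  have hB : ∀ x ∈ T, B x ≠ 0 := by
    intro x hx hBx
    obtain ⟨hxS, hxp, hxq⟩ := hTsub x hx
    exact hgen.1 p hp q hq x hxS hpq (Ne.symm hxp) (Ne.symm hxq)
      (collinear_of_sideVal_s5 hpq hBx)
  -- squared distance difference at parameter t
  have hgx : ∀ x, ∀ t : ℝ, dist x (ctr p q t) ^ 2 - dist p (ctr p q t) ^ 2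
      = A x - 2 * t * B x := fun x t => gval p q x t
  have hroot : ∀ x ∈ T, ∀ t : ℝ, A x - 2 * t * B x = 2 * B x * (rt x - t) := by
    intro x hx t
    have hBx := hB x hx
    rw [hrt]
    field_simp
  -- on-circle criterion
  have honC : ∀ x ∈ T, ∀ t : ℝ, (dist x (ctr p q t) = dist p (ctr p q t) ↔ rt x = t) := by
    intro x hx t
    rw [dist_eq_dist_iff]
    have h1 := hgx x t
    have h2 := hroot x hx t
    have hBx := hB x hx
    constructor
    · intro h
      have : 2 * B x * (rt x - t) = 0 := by linarith
      rcases mul_eq_zero.mp this with h' | h'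
      · exact absurd (by linarith) hBx
      · linarith
    · intro h
      rw [h] at h2
      simp at h2
      linarith
  have hinj : ∀ x ∈ T, ∀ y ∈ T, rt x = rt y → x = y := by
    intro x hx y hy hxy
    by_contra hne
    obtain ⟨hxS, hxp, hxq⟩ := hTsub x hx
    obtain ⟨hyS, hyp, hyq⟩ := hTsub y hy
    set t := rt x with ht
    refine hgen.2 p hp q hq x hxS y hyS hpq (Ne.symm hxp) (Ne.symm hyp)
      (Ne.symm hxq) (Ne.symm hyq) hne ?_
    refine ⟨ctr p q t, dist p (ctr p q t), radius_pos p q hpq t, rfl, gval_q p q t, ?_, ?_⟩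
    · exact (honC x hx t).mpr rfl
    · exact (honC y hy t).mpr hxy.symm
  obtain ⟨x, hx, hcount⟩ := key_lemma n hn T hTcard rt B hinj hB ha
  obtain ⟨hxS, hxp, hxq⟩ := hTsub x hx
  set s := rt x with hs
  set c := ctr p q s with hc
  set r := dist p c with hr
  have hrpos : 0 < r := radius_pos p q hpq s
  have honp : onC c r p := rfl
  have honq : onC c r q := gval_q p q s
  have honx : onC c r x := (honC x hx s).mpr rfl
  -- inside criterion for points of T
  have hin : ∀ y ∈ T, (insideC c r y ↔ B y * (rt y - s) < 0) := by
    intro y hy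
    have h1 := hgx y s
    have h2 := hroot y hy s
    rw [insideC, hr, dist_lt_dist_iff]
    constructor
    · intro h; nlinarith
    · intro h; nlinarith
  -- the filter of on-circle points
  have hfilter_on : S.filter (onC c r) = {p, q, x} := by
    ext y
    simp only [Finset.mem_filter, Finset.mem_insert, Finset.mem_singleton]
    constructor
    · rintro ⟨hyS, hyon⟩
      by_cases hyp : y = p
      · exact Or.inl hyp
      by_cases hyq : y = q
      · exact Or.inr (Or.inl hyq)
      have hyT : y ∈ T := by
        rw [hT, Finset.mem_erase, Finset.mem_erase]
        exact ⟨hyq, hyp, hyS⟩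
      have : rt y = s := (honC y hyT s).mp hyon
      exact Or.inr (Or.inr (hinj y hyT x hx (this.trans hs)))
    · rintro (rfl | rfl | rfl)
      · exact ⟨hp, honp⟩
      · exact ⟨hq, honq⟩
      · exact ⟨hxS, honx⟩
  have hcard_on : (S.filter (onC c r)).card = 3 := by
    rw [hfilter_on]
    rw [Finset.card_insert_of_notMem (by simp [hpq, Ne.symm hxp]),
      Finset.card_insert_of_notMem (by simp [Ne.symm hxq])]
    rfl
  -- the filter of inside points
  have hfilter_in : S.filter (insideC c r) = T.filter (fun y => B y * (rt y - s) < 0) := by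
    ext y
    simp only [Finset.mem_filter]
    constructor
    · rintro ⟨hyS, hyin⟩
      have hyp : y ≠ p := by
        intro h; rw [h] at hyin; exact lt_irrefl r hyin
      have hyq : y ≠ q := by
        intro h; rw [h] at hyin; rw [insideC, honq] at hyin; exact lt_irrefl r hyin
      have hyT : y ∈ T := by
        rw [hT, Finset.mem_erase, Finset.mem_erase]
        exact ⟨hyq, hyp, hyS⟩
      exact ⟨hyT, (hin y hyT).mp hyin⟩
    · rintro ⟨hyT, hylt⟩
      exact ⟨(hTsub y hyT).1, (hin y hyT).mpr hylt⟩
  have hcard_in : (S.filter (insideC c r)).card = n - 1 := by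
    rw [hfilter_in]; exact hcount
  -- trichotomy partition
  have htotal : (S.filter (onC c r)).card + (S.filter (insideC c r)).card
      + (S.filter (outsideC c r)).card = S.card := by
    have hdisj1 : Disjoint (S.filter (onC c r)) (S.filter (insideC c r)) := by
      rw [Finset.disjoint_left]
      intro y h1 h2
      rw [Finset.mem_filter] at h1 h2
      rw [onC] at h1
      rw [insideC] at h2
      linarith [h1.2, h2.2]
    have hdisj2 : Disjoint (S.filter (onC c r) ∪ S.filter (insideC c r))
        (S.filter (outsideC c r)) := by
      rw [Finset.disjoint_left]
      intro y h1 h2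
      rw [Finset.mem_filter] at h2
      rw [outsideC] at h2
      rw [Finset.mem_union, Finset.mem_filter, Finset.mem_filter] at h1
      rcases h1 with h1 | h1
      · rw [onC] at h1; linarith [h1.2, h2.2]
      · rw [insideC] at h1; linarith [h1.2, h2.2]
    have hunion : S.filter (onC c r) ∪ S.filter (insideC c r) ∪ S.filter (outsideC c r) = S := by
      rw [← Finset.filter_or, ← Finset.filter_or]
      apply Finset.filter_true_of_mem
      intro y _
      rcases lt_trichotomy (dist y c) r with h | h | h
      · exact Or.inl (Or.inr h)
      · exact Or.inl (Or.inl h)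
      · exact Or.inr h
    calc (S.filter (onC c r)).card + (S.filter (insideC c r)).card
          + (S.filter (outsideC c r)).card
        = (S.filter (onC c r) ∪ S.filter (insideC c r)).card
          + (S.filter (outsideC c r)).card := by
          rw [Finset.card_union_of_disjoint hdisj1]
      _ = (S.filter (onC c r) ∪ S.filter (insideC c r) ∪ S.filter (outsideC c r)).card := by
          rw [Finset.card_union_of_disjoint hdisj2]
      _ = S.card := by rw [hunion]
  have hcard_out : (S.filter (outsideC c r)).card = n - 1 := by
    rw [hcard_on, hcard_in, hcard] at htotal
    omega
  exact ⟨c, r, ⟨hrpos, hcard_on, hcard_in, hcard_out⟩, honp, honq⟩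
lemma sideVal_swap_s5 (p q x : Pt) : sideVal q p x = - sideVal p q x := by
  unfold sideVal; ring

lemma exists_halving (n : ℕ) (hn : 1 ≤ n) (S : Finset Pt)
    (hcard : S.card = 2 * n + 1) (hgen : GenPos S)
    (p : Pt) (hp : p ∈ S) (q : Pt) (hq : q ∈ S) (hpq : p ≠ q) :
    ∃ c r, IsHalving n S c r ∧ onC c r p ∧ onC c r q := by
  set T := (S.erase p).erase q with hT
  have hTcard : T.card = 2*n - 1 := by
    rw [hT, Finset.card_erase_of_mem (Finset.mem_erase.mpr ⟨hpq.symm, hq⟩),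
      Finset.card_erase_of_mem hp, hcard]
    omega
  have hB : ∀ x ∈ T, sideVal p q x ≠ 0 := by
    intro x hx hBx
    rw [hT, Finset.mem_erase, Finset.mem_erase] at hx
    exact hgen.1 p hp q hq x hx.2.2 hpq (Ne.symm hx.2.1) (Ne.symm hx.1)
      (collinear_of_sideVal_s5 hpq hBx)
  have hsplit : (T.filter (fun x => 0 < sideVal p q x)).card
      + (T.filter (fun x => sideVal p q x < 0)).card = 2*n - 1 := by
    have h1 : T.filter (fun x => ¬ 0 < sideVal p q x) = T.filter (fun x => sideVal p q x < 0) := by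
      apply Finset.filter_congr
      intro x hx
      constructor
      · intro h
        rcases lt_or_gt_of_ne (hB x hx) with h' | h' <;> [exact h'; exact absurd h' h]
      · intro h; exact not_lt.mpr (le_of_lt h)
    have := Finset.card_filter_add_card_filter_not (s := T)
      (p := fun x => 0 < sideVal p q x)
    rw [h1] at this
    rw [this, hTcard]
  by_cases hcase : (T.filter (fun x => 0 < sideVal p q x)).card ≤ n - 1
  · exact exists_halving_aux n hn S hcard hgen p hp q hq hpq hcase
  · have hTswap : (S.erase q).erase p = T := by
      rw [hT, Finset.erase_right_comm]
    have hfe : ((S.erase q).erase p).filter (fun x => 0 < sideVal q p x)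
        = T.filter (fun x => sideVal p q x < 0) := by
      rw [hTswap]
      apply Finset.filter_congr
      intro x _
      rw [sideVal_swap_s5]
      constructor
      · intro h; linarith
      · intro h; linarith
    have hcase2 : (((S.erase q).erase p).filter (fun x => 0 < sideVal q p x)).card ≤ n - 1 := by
      rw [hfe]
      omega
    obtain ⟨c, r, hh, h1, h2⟩ := exists_halving_aux n hn S hcard hgen q hq p hp hpq.symm hcase2
    exact ⟨c, r, hh, h2, h1⟩

lemma circle_unique {p q x c c' : Pt} {r r' : ℝ} (hside : sideVal p q x ≠ 0)
    (h1 : dist p c = r) (h2 : dist q c = r) (h3 : dist x c = r)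
    (h1' : dist p c' = r') (h2' : dist q c' = r') (h3' : dist x c' = r') :
    c = c' ∧ r = r' := by
  have e1 : dist p c ^ 2 = dist q c ^ 2 := dist_eq_dist_iff.mp (h1.trans h2.symm)
  have e2 : dist p c ^ 2 = dist x c ^ 2 := dist_eq_dist_iff.mp (h1.trans h3.symm)
  have e1' : dist p c' ^ 2 = dist q c' ^ 2 := dist_eq_dist_iff.mp (h1'.trans h2'.symm)
  have e2' : dist p c' ^ 2 = dist x c' ^ 2 := dist_eq_dist_iff.mp (h1'.trans h3'.symm)
  rw [dist_sq, dist_sq] at e1 e2 e1' e2'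
  set u := c 0 - c' 0 with hu
  set v := c 1 - c' 1 with hv
  have L1 : u * (q 0 - p 0) + v * (q 1 - p 1) = 0 := by linear_combination (e1 - e1')/2
  have L2 : u * (x 0 - p 0) + v * (x 1 - p 1) = 0 := by linear_combination (e2 - e2')/2
  have hd : (q 0 - p 0) * (x 1 - p 1) - (q 1 - p 1) * (x 0 - p 0) ≠ 0 := hside
  have hu0 : u * ((q 0 - p 0) * (x 1 - p 1) - (q 1 - p 1) * (x 0 - p 0)) = 0 := by
    linear_combination (x 1 - p 1) * L1 - (q 1 - p 1) * L2
  have hv0 : v * ((q 0 - p 0) * (x 1 - p 1) - (q 1 - p 1) * (x 0 - p 0)) = 0 := by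
    linear_combination (q 0 - p 0) * L2 - (x 0 - p 0) * L1
  have hu' : u = 0 := by
    rcases mul_eq_zero.mp hu0 with h | h
    · exact h
    · exact absurd h hd
  have hv' : v = 0 := by
    rcases mul_eq_zero.mp hv0 with h | h
    · exact h
    · exact absurd h hd
  have hcc : c = c' := by
    ext i; fin_cases i
    · show c 0 = c' 0; linarith
    · show c 1 = c' 1; linarith
  refine ⟨hcc, ?_⟩
  rw [← h1, ← h1', hcc]


lemma halving_finite (n : ℕ) (S : Finset Pt) (hgen : GenPos S) :
    (halvingSet n S).Finite := by
  apply Set.Finite.of_finite_image (f := fun cr => S.filter (onC cr.1 cr.2))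
  · apply Set.Finite.subset (S.powerset : Finset (Finset Pt)).finite_toSet
    rintro _ ⟨cr, _, rfl⟩
    rw [Finset.mem_coe, Finset.mem_powerset]
    exact Finset.filter_subset _ _
  · rintro ⟨c, r⟩ hcr ⟨c', r'⟩ hcr' heq
    simp only at heq
    simp only [halvingSet, Set.mem_setOf_eq] at hcr hcr'
    have hK : (S.filter (onC c r)).card = 3 := hcr.2.1
    obtain ⟨p, q, x, hpq, hpx, hqx, hKeq⟩ := Finset.card_eq_three.mp hK
    have hmem : ∀ y ∈ S.filter (onC c r), y ∈ S ∧ dist y c = r ∧ dist y c' = r' := by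
      intro y hy
      have hy' : y ∈ S.filter (onC c' r') := heq ▸ hy
      rw [Finset.mem_filter] at hy hy'
      exact ⟨hy.1, hy.2, hy'.2⟩
    have hpm := hmem p (by rw [hKeq]; simp)
    have hqm := hmem q (by rw [hKeq]; simp)
    have hxm := hmem x (by rw [hKeq]; simp)
    have hside : sideVal p q x ≠ 0 := by
      intro h
      exact hgen.1 p hpm.1 q hqm.1 x hxm.1 hpq hpx hqx (collinear_of_sideVal_s5 hpq h)
    obtain ⟨hc, hr⟩ := circle_unique hside hpm.2.1 hqm.2.1 hxm.2.1 hpm.2.2 hqm.2.2 hxm.2.2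
    exact Prod.ext hc hr


/-- The number of halving circles of `S` is at least `n(2n+1)/3`. -/
theorem halving_circles_lower_bound (n : ℕ) (hn : 1 ≤ n) (S : Finset Pt)
    (hcard : S.card = 2 * n + 1) (hgen : GenPos S) :
    ((n * (2 * n + 1) : ℚ)) / 3 ≤ ((halvingSet n S).ncard : ℚ) := by
  have hHfin := halving_finite n S hgen
  set φ : Pt × Pt → Pt × ℝ := fun pr =>
    if h : pr.1 ∈ S ∧ pr.2 ∈ S ∧ pr.1 ≠ pr.2 then
      (Classical.choose (exists_halving n hn S hcard hgen pr.1 h.1 pr.2 h.2.1 h.2.2),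
       Classical.choose (Classical.choose_spec
         (exists_halving n hn S hcard hgen pr.1 h.1 pr.2 h.2.1 h.2.2)))
    else (0, 0) with hφ
  have hφspec : ∀ pr ∈ S.offDiag, IsHalving n S (φ pr).1 (φ pr).2
      ∧ onC (φ pr).1 (φ pr).2 pr.1 ∧ onC (φ pr).1 (φ pr).2 pr.2 := by
    intro pr hpr
    rw [Finset.mem_offDiag] at hpr
    simp only [hφ, dif_pos hpr]
    exact Classical.choose_spec (Classical.choose_spec
      (exists_halving n hn S hcard hgen pr.1 hpr.1 pr.2 hpr.2.1 hpr.2.2))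
  set img := S.offDiag.image φ with himg
  have hfiber : ∀ b ∈ img, (S.offDiag.filter (fun a => φ a = b)).card ≤ 6 := by
    intro b hb
    obtain ⟨a0, ha0, hba⟩ := Finset.mem_image.mp hb
    have hhalv : IsHalving n S b.1 b.2 := by rw [← hba]; exact (hφspec a0 ha0).1
    set K := S.filter (onC b.1 b.2) with hK
    have hKcard : K.card = 3 := hhalv.2.1
    have hsub : S.offDiag.filter (fun a => φ a = b) ⊆ K.offDiag := by
      intro a ha
      rw [Finset.mem_filter] at ha
      obtain ⟨haoff, haφ⟩ := ha
      obtain ⟨_, hon1, hon2⟩ := hφspec a haoff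
      rw [haφ] at hon1 hon2
      rw [Finset.mem_offDiag] at haoff ⊢
      exact ⟨Finset.mem_filter.mpr ⟨haoff.1, hon1⟩,
        Finset.mem_filter.mpr ⟨haoff.2.1, hon2⟩, haoff.2.2⟩
    calc (S.offDiag.filter (fun a => φ a = b)).card ≤ K.offDiag.card :=
          Finset.card_le_card hsub
      _ = 6 := by rw [Finset.offDiag_card, hKcard]
  have hcount : S.offDiag.card ≤ 6 * img.card := by
    rw [Finset.card_eq_sum_card_image φ]
    calc (∑ b ∈ img, (S.offDiag.filter (fun a => φ a = b)).card)
        ≤ ∑ b ∈ img, 6 := Finset.sum_le_sum hfiber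
      _ = 6 * img.card := by rw [Finset.sum_const, smul_eq_mul, mul_comm]
  have himgsub : img ⊆ hHfin.toFinset := by
    intro b hb
    obtain ⟨a0, ha0, hba⟩ := Finset.mem_image.mp hb
    rw [Set.Finite.mem_toFinset]
    show IsHalving n S b.1 b.2
    rw [← hba]; exact (hφspec a0 ha0).1
  have hncard : (halvingSet n S).ncard = hHfin.toFinset.card :=
    Set.ncard_eq_toFinset_card _ hHfin
  have hoff : S.offDiag.card = (2*n+1) * (2*n+1) - (2*n+1) := by
    rw [Finset.offDiag_card, hcard]
  have hfinal : (2*n+1) * (2*n+1) - (2*n+1) ≤ 6 * (halvingSet n S).ncard := by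
    rw [hncard]
    calc (2*n+1) * (2*n+1) - (2*n+1) = S.offDiag.card := hoff.symm
      _ ≤ 6 * img.card := hcount
      _ ≤ 6 * hHfin.toFinset.card := by
          exact Nat.mul_le_mul_left 6 (Finset.card_le_card himgsub)
  rw [div_le_iff₀ (by norm_num : (0:ℚ) < 3)]
  have : ((2*n+1) * (2*n+1) - (2*n+1) : ℕ) = 4*n^2 + 2*n := by ring_nf; omega
  rw [this] at hfinal
  have hq : (4*n^2 + 2*n : ℚ) ≤ 6 * ((halvingSet n S).ncard : ℚ) := by
    exact_mod_cast hfinal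
  push_cast
  nlinarith [hq]
end
end

section
/- Let A, B be points, and let P_i, P_j be two other points such that segment AB crosses line P_iP_j and no point of a set S lies in the region inside circle AP_iP_j and inside circle BP_iP_j, nor in the region outside both circles. If circle AP_iP_j has a points of S strictly inside and b strictly outside, then circle BP_iP_j has b points of S strictly inside and a strictly outside. -/
/-!
A point lying on neither circle is inside or outside each of them; since it is neither inside
both nor outside both, it is inside the second circle exactly when it is outside the first, and
outside the second exactly when it is inside the first. The two counts are therefore exchanged.
-/

open scoped Classical

noncomputable section

theorem insideC_iff_outsideC_of_not_onC {c₁ c₂ : Pt} {r₁ r₂ : ℝ} {p : Pt}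
    (h₁ : ¬ onC c₁ r₁ p) (h₂ : ¬ onC c₂ r₂ p)
    (hin : ¬ (insideC c₁ r₁ p ∧ insideC c₂ r₂ p))
    (hout : ¬ (outsideC c₁ r₁ p ∧ outsideC c₂ r₂ p)) :
    insideC c₂ r₂ p ↔ outsideC c₁ r₁ p := by
  unfold onC insideC outsideC at *
  constructor
  · intro h
    exact lt_of_le_of_ne (not_lt.1 fun h' => hin ⟨h', h⟩) (Ne.symm h₁)
  · intro h
    exact lt_of_le_of_ne (not_lt.1 fun h' => hout ⟨h, h'⟩) h₂

theorem crossing_line_swaps_split_general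
    (c₁ : Pt) (r₁ : ℝ)
    (c₂ : Pt) (r₂ : ℝ)
    (S : Finset Pt)
    (hnoton : ∀ p ∈ S, ¬ onC c₁ r₁ p ∧ ¬ onC c₂ r₂ p)
    (hreg1 : ∀ p ∈ S, ¬ (insideC c₁ r₁ p ∧ insideC c₂ r₂ p))
    (hreg2 : ∀ p ∈ S, ¬ (outsideC c₁ r₁ p ∧ outsideC c₂ r₂ p))
    (a b : ℕ)
    (hsplit : (S.filter (insideC c₁ r₁)).card = a ∧
              (S.filter (outsideC c₁ r₁)).card = b) :
    (S.filter (insideC c₂ r₂)).card = b ∧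
    (S.filter (outsideC c₂ r₂)).card = a := by
  have inside_iff : ∀ p ∈ S, insideC c₂ r₂ p ↔ outsideC c₁ r₁ p := fun p hp =>
    insideC_iff_outsideC_of_not_onC (hnoton p hp).1 (hnoton p hp).2 (hreg1 p hp) (hreg2 p hp)
  have outside_iff : ∀ p ∈ S, outsideC c₂ r₂ p ↔ insideC c₁ r₁ p := fun p hp =>
    (insideC_iff_outsideC_of_not_onC (hnoton p hp).2 (hnoton p hp).1
      (fun h => hreg1 p hp h.symm) (fun h => hreg2 p hp h.symm)).symm
  rw [Finset.filter_congr inside_iff, Finset.filter_congr outside_iff]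
  exact hsplit.symm

/-- Crossing a line: if `A`, `B` are on opposite sides of line `P_iP_j`, no point
of `S` is inside both circles `AP_iP_j` and `BP_iP_j` nor outside both, and
circle `AP_iP_j` splits `S` as `(a,b)`, then circle `BP_iP_j` splits `S` as `(b,a)`. -/
theorem crossing_line_swaps_split (A B Pi Pj : Pt)
    (h1 : ¬ Collinear ℝ ({A, Pi, Pj} : Set Pt))
    (h2 : ¬ Collinear ℝ ({B, Pi, Pj} : Set Pt))
    (hopp : sideVal Pi Pj A * sideVal Pi Pj B < 0)
    (c₁ : Pt) (r₁ : ℝ) (hr₁ : 0 < r₁)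
    (hc₁ : onC c₁ r₁ A ∧ onC c₁ r₁ Pi ∧ onC c₁ r₁ Pj)
    (c₂ : Pt) (r₂ : ℝ) (hr₂ : 0 < r₂)
    (hc₂ : onC c₂ r₂ B ∧ onC c₂ r₂ Pi ∧ onC c₂ r₂ Pj)
    (S : Finset Pt)
    (hdisj : A ∉ S ∧ B ∉ S ∧ Pi ∉ S ∧ Pj ∉ S)
    (hnoton : ∀ p ∈ S, ¬ onC c₁ r₁ p ∧ ¬ onC c₂ r₂ p)
    (hreg1 : ∀ p ∈ S, ¬ (insideC c₁ r₁ p ∧ insideC c₂ r₂ p))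
    (hreg2 : ∀ p ∈ S, ¬ (outsideC c₁ r₁ p ∧ outsideC c₂ r₂ p))
    (a b : ℕ)
    (hsplit : (S.filter (insideC c₁ r₁)).card = a ∧
              (S.filter (outsideC c₁ r₁)).card = b) :
    (S.filter (insideC c₂ r₂)).card = b ∧
    (S.filter (outsideC c₂ r₂)).card = a :=
  crossing_line_swaps_split_general c₁ r₁ c₂ r₂ S hnoton hreg1 hreg2 a b hsplit
end
end

section
/- Let S be a set of 2n-1 points in the plane, no three collinear, and let Q be a point lying strictly outside every circle determined by three points of S, with Q not collinear with any two points of S. Then for any two distinct points X, Y ∈ S, the circumcircle of Q, X, Y contains a point P ∈ S strictly inside it if and only if P lies on the same side of line XY as Q. -/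
open scoped Classical

noncomputable section

lemma distsq_eq (a b : Pt) : dist a b ^ 2 = (a 0 - b 0)^2 + (a 1 - b 1)^2 := by
  rw [EuclideanSpace.dist_eq, Real.sq_sqrt (by positivity)]
  simp [Fin.sum_univ_two, Real.dist_eq, sq_abs]

lemma collinear_of_sideVal_zero (X Y Q : Pt) (hXY : X ≠ Y) (h : sideVal X Y Q = 0) :
    Collinear ℝ ({Q, X, Y} : Set Pt) := by
  rw [collinear_iff_exists_forall_eq_smul_vadd]
  refine ⟨X, Y - X, ?_⟩
  simp only [sideVal] at h
  rintro p (rfl | rfl | rfl)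
  · by_cases h0 : Y 0 - X 0 = 0
    · have h1 : Y 1 - X 1 ≠ 0 := by
        intro h1; exact hXY (pt_ext (by linarith) (by linarith)).symm
      refine ⟨(p 1 - X 1) / (Y 1 - X 1), pt_ext ?_ ?_⟩ <;>
        · simp only [PiLp.add_apply, PiLp.smul_apply, PiLp.sub_apply, vadd_eq_add,
            smul_eq_mul]
          field_simp
          all_goals nlinarith [h, h0]
    · refine ⟨(p 0 - X 0) / (Y 0 - X 0), pt_ext ?_ ?_⟩ <;>
        · simp only [PiLp.add_apply, PiLp.smul_apply, PiLp.sub_apply, vadd_eq_add,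
            smul_eq_mul]
          field_simp
          all_goals nlinarith [h]
  · exact ⟨0, by simp⟩
  · exact ⟨1, by apply pt_ext <;> simp [vadd_eq_add]⟩

lemma inside_iff_aux {f g s t : ℝ} (key2 : f * t = -s * g) (ht : 0 < t) (hg : 0 < g) :
    f < 0 ↔ 0 < s := by
  constructor
  · intro hf; nlinarith
  · intro hs; nlinarith

lemma exists_circumcircle (X Y P : Pt) (h : ¬ Collinear ℝ ({X, Y, P} : Set Pt)) :
    ∃ c' r', 0 < r' ∧ dist X c' = r' ∧ dist Y c' = r' ∧ dist P c' = r' := by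
  have hai : AffineIndependent ℝ ![X, Y, P] := affineIndependent_iff_not_collinear_set.mpr h
  let T : Affine.Simplex ℝ Pt 2 := ⟨![X, Y, P], hai⟩
  have hd : ∀ i, dist (T.points i) T.circumcenter = T.circumradius :=
    T.dist_circumcenter_eq_circumradius
  have h0 := hd 0; have h1 := hd 1; have h2 := hd 2
  simp only [T, Matrix.cons_val_zero, Matrix.cons_val_one, Matrix.head_cons,
    Matrix.cons_val_two, Matrix.tail_cons] at h0 h1 h2
  have hXY : X ≠ Y := by
    rintro rfl; exact h (by simp [Set.insert_comm]; exact collinear_pair ℝ _ _)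
  have hrpos : 0 < T.circumradius := by
    have := dist_triangle X T.circumcenter Y
    have hxy : 0 < dist X Y := dist_pos.mpr hXY
    rw [dist_comm T.circumcenter Y] at this
    nlinarith [h0, h1]
  exact ⟨T.circumcenter, T.circumradius, hrpos, h0, h1, h2⟩

set_option maxHeartbeats 1000000

/-- If `Q` is outside every circle through three points of `S`, then circle `QXY`
contains `P ∈ S` strictly inside iff `P` is on the same side of line `XY` as `Q`. -/
theorem far_point_circle_like_line (n : ℕ) (S : Finset Pt)
    (hcard : S.card = 2 * n - 1)
    (hnocol : ∀ p ∈ S, ∀ q ∈ S, ∀ u ∈ S, p ≠ q → p ≠ u → q ≠ u →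
      ¬ Collinear ℝ ({p, q, u} : Set Pt))
    (Q : Pt) (hQS : Q ∉ S)
    (hQout : ∀ p ∈ S, ∀ q ∈ S, ∀ u ∈ S, p ≠ q → p ≠ u → q ≠ u →
      ∀ c : Pt, ∀ r : ℝ, 0 < r → onC c r p → onC c r q → onC c r u → outsideC c r Q)
    (hQnocol : ∀ p ∈ S, ∀ q ∈ S, p ≠ q → ¬ Collinear ℝ ({Q, p, q} : Set Pt)) :
    ∀ X ∈ S, ∀ Y ∈ S, X ≠ Y →
      ∀ c : Pt, ∀ r : ℝ, 0 < r → onC c r Q → onC c r X → onC c r Y →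
        ∀ P ∈ S, P ≠ X → P ≠ Y →
          (insideC c r P ↔ 0 < sideVal X Y P * sideVal X Y Q) := by
  intro X hX Y hY hXY c r hr hQc hXc hYc P hP hPX hPY
  have hXYP : ¬ Collinear ℝ ({X, Y, P} : Set Pt) :=
    hnocol X hX Y hY P hP hXY (Ne.symm hPX) (Ne.symm hPY)
  obtain ⟨c', r', hr', hXc', hYc', hPc'⟩ := exists_circumcircle X Y P hXYP
  have hQout' : r' < dist Q c' :=
    hQout X hX Y hY P hP hXY (Ne.symm hPX) (Ne.symm hPY) c' r' hr' hXc' hYc' hPc'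
  have hsQ : sideVal X Y Q ≠ 0 := fun h =>
    hQnocol X hX Y hY hXY (collinear_of_sideVal_zero X Y Q hXY h)
  have eX : (X 0 - c 0)^2 + (X 1 - c 1)^2 = r^2 := by rw [← distsq_eq, hXc]
  have eY : (Y 0 - c 0)^2 + (Y 1 - c 1)^2 = r^2 := by rw [← distsq_eq, hYc]
  have eQ : (Q 0 - c 0)^2 + (Q 1 - c 1)^2 = r^2 := by rw [← distsq_eq, hQc]
  have eX' : (X 0 - c' 0)^2 + (X 1 - c' 1)^2 = r'^2 := by rw [← distsq_eq, hXc']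
  have eY' : (Y 0 - c' 0)^2 + (Y 1 - c' 1)^2 = r'^2 := by rw [← distsq_eq, hYc']
  have eP' : (P 0 - c' 0)^2 + (P 1 - c' 1)^2 = r'^2 := by rw [← distsq_eq, hPc']
  have eQ' : r'^2 < (Q 0 - c' 0)^2 + (Q 1 - c' 1)^2 := by
    rw [← distsq_eq]; exact pow_lt_pow_left₀ hQout' hr'.le two_ne_zero
  have key : ((P 0 - c 0)^2 + (P 1 - c 1)^2 - r^2) * sideVal X Y Q
      = -(sideVal X Y P) * (((Q 0 - c' 0)^2 + (Q 1 - c' 1)^2) - r'^2) := by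
    simp only [sideVal]
    linear_combination ((Q 0 - Y 0) * (P 1 - Y 1) - (Q 1 - Y 1) * (P 0 - Y 0)) * eX
      - ((Q 0 - Y 0) * (P 1 - Y 1) - (Q 1 - Y 1) * (P 0 - Y 0)) * eX'
      + ((X 0 - Q 0) * (P 1 - Q 1) - (X 1 - Q 1) * (P 0 - Q 0)) * eY
      - ((X 0 - Q 0) * (P 1 - Q 1) - (X 1 - Q 1) * (P 0 - Q 0)) * eY'
      + ((Y 0 - X 0) * (Q 1 - X 1) - (Y 1 - X 1) * (Q 0 - X 0)) * eP'
      + ((Y 0 - X 0) * (P 1 - X 1) - (Y 1 - X 1) * (P 0 - X 0)) * eQ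
  have hsQsq : 0 < sideVal X Y Q ^ 2 :=
    lt_of_le_of_ne (sq_nonneg _) (Ne.symm (pow_ne_zero 2 hsQ))
  have hg : 0 < ((Q 0 - c' 0)^2 + (Q 1 - c' 1)^2) - r'^2 := by linarith
  have key2 : ((P 0 - c 0)^2 + (P 1 - c 1)^2 - r^2) * sideVal X Y Q ^ 2
      = -(sideVal X Y P * sideVal X Y Q) * (((Q 0 - c' 0)^2 + (Q 1 - c' 1)^2) - r'^2) := by
    linear_combination sideVal X Y Q * key
  have hins : insideC c r P ↔ (P 0 - c 0)^2 + (P 1 - c 1)^2 < r^2 := by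
    unfold insideC
    rw [← distsq_eq]
    constructor
    · intro h; exact pow_lt_pow_left₀ h dist_nonneg two_ne_zero
    · intro h; exact lt_of_pow_lt_pow_left₀ 2 hr.le h
  rw [hins]
  have := inside_iff_aux key2 hsQsq hg
  constructor
  · intro h; exact this.mp (by linarith)
  · intro h; have := this.mpr h; linarith
end
end
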